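/- arXiv:1701.01157 — 6 statements merged into one kernel-verified Lean document; each statement's English description precedes it below -/
import Mathlib

section
/- A nonzero integer n is congruent to a sum of two squares modulo 2^α for every α ≥ 1 if and only if n = 2^β · m for some β ≥ 0 and some integer m ≡ 1 (mod 4). -/
/-!
If `m ≡ 1 (mod 8)`, Hensel's lemma for `X² - m` at `1` gives a square root of `m` in `ℤ₂`, so `m`
is a square modulo every `2^α`; if `m ≡ 5 (mod 8)`, the same holds for `m - 4 = m - 2²`.
Multiplying by `2` preserves sums of two squares: `2(a² + b²) = (a + b)² + (a - b)²`.

Conversely, if `2^β m ≡ a² + b² (mod 2^(β+2))` with `m` odd and `β > 0`, then `a ≡ b (mod 2)`,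
and the identity above, read backwards, halves both sides and the modulus. At `β = 0`, squares
are `0` or `1` modulo `4`, forcing `m ≡ 1 (mod 4)`.
-/

open Polynomial

theorem exists_sq_modEq_two_pow_of_emod_eight_eq_one {m : ℤ} (hm : m % 8 = 1) (α : ℕ) :
    ∃ a : ℤ, a ^ 2 ≡ m [ZMOD 2 ^ α] := by
  have hnorm : ‖(X ^ 2 - C m).aeval (1 : ℤ_[2])‖ <
      ‖(X ^ 2 - C m).derivative.aeval (1 : ℤ_[2])‖ ^ 2 := by
    have hval : (X ^ 2 - C m).aeval (1 : ℤ_[2]) = ((1 - m : ℤ) : ℤ_[2]) := by simp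
    have hder : (X ^ 2 - C m).derivative.aeval (1 : ℤ_[2]) = 2 := by simp [map_ofNat]
    have h2 : ‖(2 : ℤ_[2])‖ = 2⁻¹ := by exact_mod_cast PadicInt.norm_p (p := 2)
    have h8 := PadicInt.norm_int_le_pow_iff_dvd.mpr (show ((2 : ℕ) ^ 3 : ℤ) ∣ 1 - m by omega)
    rw [hval, hder, h2]
    norm_num at h8 ⊢
    linarith
  obtain ⟨z, hz, -⟩ := hensels_lemma hnorm
  have hz2 : z ^ 2 = m := by simpa [sub_eq_zero] using hz
  refine ⟨(PadicInt.toZModPow α z).val, ?_⟩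
  have h : ((((PadicInt.toZModPow α z).val : ℤ) ^ 2 : ℤ) : ZMod (2 ^ α)) = m := by
    simpa using congrArg (PadicInt.toZModPow α) hz2
  exact_mod_cast (ZMod.intCast_eq_intCast_iff _ _ _).mp h

theorem exists_sq_add_sq_modEq_two_pow_of_emod_four_eq_one {m : ℤ} (hm : m % 4 = 1) (α : ℕ) :
    ∃ a b : ℤ, a ^ 2 + b ^ 2 ≡ m [ZMOD 2 ^ α] := by
  rcases (by omega : m % 8 = 1 ∨ (m - 4) % 8 = 1) with h | h
  · obtain ⟨a, ha⟩ := exists_sq_modEq_two_pow_of_emod_eight_eq_one h α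
    exact ⟨a, 0, by simpa using ha⟩
  · obtain ⟨a, ha⟩ := exists_sq_modEq_two_pow_of_emod_eight_eq_one h α
    exact ⟨a, 2, by simpa using ha.add_right 4⟩

theorem exists_sq_add_sq_eq_two_pow_mul (β : ℕ) (a b : ℤ) :
    ∃ c d : ℤ, c ^ 2 + d ^ 2 = 2 ^ β * (a ^ 2 + b ^ 2) := by
  induction β with
  | zero => exact ⟨a, b, by ring⟩
  | succ β ih =>
    obtain ⟨c, d, h⟩ := ih
    exact ⟨c + d, c - d, by linear_combination 2 * h⟩

theorem Int.sq_emod_four_eq_zero_or_one (a : ℤ) : a ^ 2 % 4 = 0 ∨ a ^ 2 % 4 = 1 := by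
  rcases Int.even_or_odd a with ⟨k, rfl⟩ | ha
  · left
    rw [show (k + k) ^ 2 = 4 * k ^ 2 by ring, Int.mul_emod_right]
  · exact Or.inr (Int.sq_mod_four_eq_one_of_odd ha)

theorem emod_four_eq_one_of_two_pow_mul_modEq_sq_add_sq {m : ℤ} (hm : m % 2 = 1) (β : ℕ)
    {a b : ℤ} (h : 2 ^ β * m ≡ a ^ 2 + b ^ 2 [ZMOD 2 ^ (β + 2)]) : m % 4 = 1 := by
  induction β generalizing a b with
  | zero =>
    have := Int.sq_emod_four_eq_zero_or_one a
    have := Int.sq_emod_four_eq_zero_or_one b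
    simp only [Int.ModEq, pow_zero, one_mul, zero_add] at h
    omega
  | succ β ih =>
    have heven : Even (a ^ 2 + b ^ 2) := even_iff_two_dvd.mpr <|
      (h.of_dvd (dvd_pow_self 2 (by omega))).dvd_iff.mp
        (dvd_mul_of_dvd_left (dvd_pow_self 2 (by omega)) m)
    obtain ⟨c, hc⟩ : Even (a + b) := by simpa [Int.even_add, Int.even_pow] using heven
    obtain rfl : a = c + c - b := by linarith
    refine ih (a := c) (b := c - b) (Int.ModEq.mul_left_cancel' two_ne_zero ?_)
    rw [← mul_assoc, ← pow_succ', ← pow_succ']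
    convert h using 2
    ring

/-- A nonzero integer `n` is congruent to a sum of two squares modulo `2^α` for
every `α ≥ 1` if and only if `n = 2^β * m` for some `β ≥ 0` and `m ≡ 1 (mod 4)`. -/
theorem mem_S_two_iff (n : ℤ) (hn : n ≠ 0) :
    (∀ α : ℕ, 1 ≤ α → ∃ a b : ℤ, 0 ≤ a ∧ 0 ≤ b ∧ n ≡ a ^ 2 + b ^ 2 [ZMOD (2 : ℤ) ^ α]) ↔
      ∃ (β : ℕ) (m : ℤ), m % 4 = 1 ∧ n = 2 ^ β * m := by
  constructor
  · intro h
    obtain ⟨m, hnm, hm⟩ :=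
      (Int.finiteMultiplicity_iff.mpr ⟨by decide, hn⟩).exists_eq_pow_mul_and_not_dvd (a := 2)
    generalize multiplicity 2 n = β at hnm
    subst hnm
    obtain ⟨a, b, -, -, hab⟩ := h (β + 2) (by omega)
    exact ⟨β, m, emod_four_eq_one_of_two_pow_mul_modEq_sq_add_sq (by omega) β hab, rfl⟩
  · rintro ⟨β, m, hm, rfl⟩ α -
    obtain ⟨a, b, hab⟩ := exists_sq_add_sq_modEq_two_pow_of_emod_four_eq_one hm α
    obtain ⟨c, d, hcd⟩ := exists_sq_add_sq_eq_two_pow_mul β a b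
    refine ⟨|c|, |d|, abs_nonneg c, abs_nonneg d, ?_⟩
    rw [sq_abs, sq_abs, hcd]
    exact (hab.mul_left _).symm
end

section
/- Let p be a prime with p ≡ 3 (mod 4). A nonzero integer n is congruent to a sum of two squares modulo p^α for every α ≥ 1 if and only if n = p^{2β} · m for some β ≥ 0 and some integer m not divisible by p. -/
/-!
Since `-1` is not a square mod `p`, `p ∣ a² + b²` forces `p ∣ a` and `p ∣ b`; descending by
`p²`, a sum of two squares divisible by `p^(2j+1)` is divisible by `p^(2j+2)`, so
`p^(2j+1) m` with `p ∤ m` is not a sum of two squares mod `p^(2j+2)`.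
Conversely, `m` prime to `p` is `a² + b²` mod `p` with `p ∤ a`, and Hensel lifting of the
square root `a` of `m - b²` gives such a representation mod every `p^α`; multiplying by
`(p^β)²` handles `p^(2β) m`.
-/

namespace Int

theorem dvd_and_dvd_of_dvd_sq_add_sq {p : ℕ} [Fact p.Prime] (hp3 : p % 4 = 3) {a b : ℤ}
    (h : (p : ℤ) ∣ a ^ 2 + b ^ 2) : (p : ℤ) ∣ a ∧ (p : ℤ) ∣ b := by
  have hab : (a : ZMod p) ^ 2 = -(b : ZMod p) ^ 2 := by
    rw [eq_neg_iff_add_eq_zero]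
    exact_mod_cast (ZMod.intCast_zmod_eq_zero_iff_dvd _ p).2 h
  have hb : (b : ZMod p) = 0 := by
    by_contra hb
    exact ZMod.mod_four_ne_three_of_sq_eq_neg_sq' hb hab hp3
  have ha : (a : ZMod p) = 0 := by simpa [hb] using hab
  exact ⟨(ZMod.intCast_zmod_eq_zero_iff_dvd a p).1 ha,
    (ZMod.intCast_zmod_eq_zero_iff_dvd b p).1 hb⟩

theorem pow_succ_dvd_sq_add_sq_of_pow_dvd {p : ℕ} [Fact p.Prime] (hp3 : p % 4 = 3) (j : ℕ)
    {a b : ℤ} (h : (p : ℤ) ^ (2 * j + 1) ∣ a ^ 2 + b ^ 2) :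
    (p : ℤ) ^ (2 * j + 2) ∣ a ^ 2 + b ^ 2 := by
  induction j generalizing a b with
  | zero =>
    obtain ⟨⟨a, rfl⟩, ⟨b, rfl⟩⟩ := dvd_and_dvd_of_dvd_sq_add_sq hp3 (by simpa using h)
    exact ⟨a ^ 2 + b ^ 2, by ring⟩
  | succ j ih =>
    obtain ⟨⟨a, rfl⟩, ⟨b, rfl⟩⟩ :=
      dvd_and_dvd_of_dvd_sq_add_sq hp3 ((dvd_pow_self _ (by omega)).trans h)
    have hsq : ((p : ℤ) * a) ^ 2 + ((p : ℤ) * b) ^ 2 = (p : ℤ) ^ 2 * (a ^ 2 + b ^ 2) := by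
      ring
    have hp2 : (p : ℤ) ^ 2 ≠ 0 := pow_ne_zero 2 (mod_cast (Fact.out : p.Prime).ne_zero)
    rw [hsq, show 2 * (j + 1) + 1 = 2 + (2 * j + 1) by ring, pow_add] at h
    rw [hsq, show 2 * (j + 1) + 2 = 2 + (2 * j + 2) by ring, pow_add]
    exact mul_dvd_mul_left _ (ih ((mul_dvd_mul_iff_left hp2).1 h))

theorem not_pow_mul_modEq_sq_add_sq {p : ℕ} [Fact p.Prime] (hp3 : p % 4 = 3) (j : ℕ)
    {m : ℤ} (hm : ¬ (p : ℤ) ∣ m) (a b : ℤ) :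
    ¬ (p : ℤ) ^ (2 * j + 1) * m ≡ a ^ 2 + b ^ 2 [ZMOD (p : ℤ) ^ (2 * j + 2)] := by
  intro h
  have hdiff := h.dvd
  have hp0 : (p : ℤ) ≠ 0 := mod_cast (Fact.out : p.Prime).ne_zero
  have hsum : (p : ℤ) ^ (2 * j + 1) ∣ a ^ 2 + b ^ 2 := by
    simpa using
      dvd_add ((pow_dvd_pow (p : ℤ) (2 * j + 1).le_succ).trans hdiff) (dvd_mul_right _ m)
  have hpm : (p : ℤ) ^ (2 * j + 1) * p ∣ (p : ℤ) ^ (2 * j + 1) * m := by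
    simpa [← pow_succ] using dvd_sub (pow_succ_dvd_sq_add_sq_of_pow_dvd hp3 j hsum) hdiff
  exact hm ((mul_dvd_mul_iff_left (pow_ne_zero _ hp0)).1 hpm)

theorem exists_modEq_and_sq_modEq_sq_of_sq_modEq {q x y : ℤ} (hx : IsCoprime q (2 * x))
    (h : x ^ 2 ≡ y [ZMOD q]) : ∃ x', x' ≡ x [ZMOD q] ∧ x' ^ 2 ≡ y [ZMOD q ^ 2] := by
  obtain ⟨d, hd⟩ := h.symm.dvd
  obtain ⟨v, u, huv⟩ := hx
  -- Newton step for `X² - y`: `u` inverts `2x` modulo `q`.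
  refine ⟨x - u * d * q, ?_, ?_⟩
  · exact Int.modEq_iff_dvd.2 ⟨u * d, by ring⟩
  · refine Int.modEq_iff_dvd.2 ⟨-(d * v) - u ^ 2 * d ^ 2, ?_⟩
    linear_combination (-1 : ℤ) * hd + q * d * huv

theorem exists_sq_modEq_pow_of_sq_modEq {p x y : ℤ} (hx : IsCoprime p (2 * x))
    (h : x ^ 2 ≡ y [ZMOD p]) (α : ℕ) : ∃ x', x' ^ 2 ≡ y [ZMOD p ^ α] := by
  suffices ∀ k : ℕ, ∃ x', x' ≡ x [ZMOD p] ∧ x' ^ 2 ≡ y [ZMOD p ^ (k + 1)] by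
    obtain ⟨x', -, hx'⟩ := this α
    exact ⟨x', Int.ModEq.of_dvd (pow_dvd_pow _ α.le_succ) hx'⟩
  intro k
  induction k with
  | zero => exact ⟨x, rfl, by simpa using h⟩
  | succ k ih =>
    obtain ⟨x', hx'x, hx'⟩ := ih
    have hcop : IsCoprime (p ^ (k + 1)) (2 * x') := by
      obtain ⟨t, ht⟩ := hx'x.symm.dvd
      rw [show 2 * x' = 2 * x + p * (2 * t) by linear_combination 2 * ht]
      exact (hx.add_mul_left_right _).pow_left
    obtain ⟨x'', hx''x', hx''⟩ := exists_modEq_and_sq_modEq_sq_of_sq_modEq hcop hx'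
    refine ⟨x'', (hx''x'.of_dvd (dvd_pow_self _ k.succ_ne_zero)).trans hx'x, ?_⟩
    rw [← pow_mul] at hx''
    exact hx''.of_dvd (pow_dvd_pow _ (by omega))

theorem exists_sq_add_sq_modEq_prime_pow {p : ℕ} [Fact p.Prime] (hp2 : p ≠ 2) {c : ℤ}
    (hc : ¬ (p : ℤ) ∣ c) (α : ℕ) :
    ∃ a b : ℤ, c ≡ a ^ 2 + b ^ 2 [ZMOD (p : ℤ) ^ α] := by
  have hprime : Prime (p : ℤ) := Nat.prime_iff_prime_int.mp Fact.out
  have h2 : ¬ (p : ℤ) ∣ 2 := fun h ↦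
    hp2 ((Nat.prime_dvd_prime_iff_eq Fact.out Nat.prime_two).1 (by exact_mod_cast h))
  have hlift : ∀ a b : ℤ, ¬ (p : ℤ) ∣ a → a ^ 2 + b ^ 2 ≡ c [ZMOD p] →
      ∃ a b : ℤ, c ≡ a ^ 2 + b ^ 2 [ZMOD (p : ℤ) ^ α] := by
    intro a b ha hab
    have hcop : IsCoprime (p : ℤ) (2 * a) :=
      hprime.coprime_iff_not_dvd.2 fun h ↦ (hprime.dvd_mul.1 h).elim h2 ha
    have hsq : a ^ 2 ≡ c - b ^ 2 [ZMOD p] :=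
      Int.ModEq.add_right_cancel' (b ^ 2) (by rwa [sub_add_cancel])
    obtain ⟨a', ha'⟩ := exists_sq_modEq_pow_of_sq_modEq hcop hsq α
    exact ⟨a', b, ((ha'.add_right (b ^ 2)).trans (by rw [sub_add_cancel])).symm⟩
  obtain ⟨a, b, -, -, hab⟩ := Nat.sq_add_sq_zmodEq p c
  by_cases ha : (p : ℤ) ∣ a
  · refine hlift b a (fun hb ↦ hc ?_) (by rwa [add_comm])
    simpa using dvd_add hab.dvd (dvd_add (dvd_pow ha two_ne_zero) (dvd_pow hb two_ne_zero))
  · exact hlift a b ha hab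
end Int

/-- For a prime `p ≡ 3 (mod 4)`, a nonzero integer `n` is congruent to a sum of two
squares modulo `p^α` for every `α ≥ 1` iff `n = p^(2β) * m` with `p ∤ m`. -/
theorem mem_S_p_iff (p : ℕ) (hp : p.Prime) (hp3 : p % 4 = 3) (n : ℤ) (hn : n ≠ 0) :
    (∀ α : ℕ, 1 ≤ α → ∃ a b : ℤ, n ≡ a ^ 2 + b ^ 2 [ZMOD (p : ℤ) ^ α]) ↔
      ∃ (β : ℕ) (m : ℤ), ¬ (p : ℤ) ∣ m ∧ n = (p : ℤ) ^ (2 * β) * m := by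
  have := Fact.mk hp
  constructor
  · intro h
    have hfin : FiniteMultiplicity (p : ℤ) n :=
      Int.finiteMultiplicity_iff.2 ⟨by simpa using hp.ne_one, hn⟩
    obtain ⟨m, hnm, hm⟩ := hfin.exists_eq_pow_mul_and_not_dvd
    obtain ⟨k, hk | hk⟩ := Nat.even_or_odd' (multiplicity (p : ℤ) n)
    · exact ⟨k, m, hm, by rw [hnm, hk]⟩
    · obtain ⟨a, b, hab⟩ := h (2 * k + 2) (by omega)
      rw [hnm, hk] at hab
      exact absurd hab (Int.not_pow_mul_modEq_sq_add_sq hp3 k hm a b)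
  · rintro ⟨β, m, hm, rfl⟩ α -
    obtain ⟨a, b, hab⟩ := Int.exists_sq_add_sq_modEq_prime_pow (by omega) hm α
    exact ⟨(p : ℤ) ^ β * a, (p : ℤ) ^ β * b, by
      convert hab.mul_left ((p : ℤ) ^ (2 * β)) using 1; ring⟩
end

section
/- Fix A ≥ 1. For all real x ≥ 1, the sum over squarefree integers n > x of A^{ω(n)}/n² is O_A((log 3x)^{A−1}/x), where ω(n) is the number of distinct prime factors of n. -/
/-!
For squarefree `n`, `A ^ ω(n) = ∑_{d ∣ n} (A - 1) ^ ω(d)`. Writing `n = d m` in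
`T_λ(x) = ∑_{n > x squarefree} λ ^ ω(n) / n²` therefore gives
`T_A(x) ≤ (2 / x) S_{A-1}(x) + 2 T_{A-1}(x)`, where `S_λ(x) = ∑_{d ≤ x squarefree} λ ^ ω(d) / d`:
for `d ≤ x` the sum of `1 / m²` over `m > x / d` is at most `2 d / x`, and for `d > x` it is
at most `2`.

Multiplicativity gives `S_λ(x) ≤ ∏_{p ≤ x} (1 + λ / p) ≤ exp (λ ∑_{p ≤ x} 1 / p)`, which
is `≪_λ (log 3x) ^ λ` by Mertens' bound `∑_{p ≤ x} 1 / p ≤ log log x + O(1)`. Iterating the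
recursion down to `λ ≤ 1`, where `T_λ(x) ≤ ∑_{n > x} 1 / n² ≤ 2 / x`, shows the cruder
`T_λ(x) ≪_λ (log 3x) ^ λ / x`; used with `λ = A - 1` in the recursion, both terms are
`≪_A (log 3x) ^ (A - 1) / x`.

Mertens' bound comes by partial summation from `∑_{p ≤ n} log p / p ≤ log n + log 4`, a
consequence of Legendre's formula for `n!` and Chebyshev's bound `θ(n) ≤ n log 4`.
-/

open Real Finset
open scoped Nat

lemma Nat.div_le_factorization_factorial {p : ℕ} (hp : p.Prime) (n : ℕ) :
    n / p ≤ (n !).factorization p := by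
  rcases Nat.eq_zero_or_pos n with rfl | hn
  · simp
  rw [Nat.factorization_factorial hp ((Nat.log_lt_self p hn.ne').trans n.lt_succ_self)]
  simpa using single_le_sum (f := fun i => n / p ^ i) (fun _ _ => Nat.zero_le _)
    (mem_Ico.mpr ⟨le_rfl, Nat.succ_lt_succ hn⟩)

lemma sum_primesLE_div_mul_log_le_log_factorial (n : ℕ) :
    ∑ p ∈ n.primesLE, ((n / p : ℕ) : ℝ) * log p ≤ log n ! := by
  rw [log_nat_eq_sum_factorization, Finsupp.sum, Nat.support_factorization]
  refine (sum_le_sum fun p hp => ?_).trans (sum_le_sum_of_subset_of_nonneg ?_ fun p _ _ => ?_)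
  · have := Nat.div_le_factorization_factorial (Nat.prime_of_mem_primesLE hp) n
    gcongr
  · intro p hp
    have := Nat.mem_primesLE.mp hp
    exact Nat.mem_primeFactors.mpr
      ⟨this.2, Nat.dvd_factorial this.2.pos this.1, n.factorial_ne_zero⟩
  · exact mul_nonneg (Nat.cast_nonneg _) (log_natCast_nonneg p)

theorem sum_primesLE_log_div_le (n : ℕ) :
    ∑ p ∈ n.primesLE, log p / p ≤ log n + log 4 := by
  rcases Nat.eq_zero_or_pos n with rfl | hn
  · simp [log_nonneg]
  have hn' : (0 : ℝ) < n := by exact_mod_cast hn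
  -- `n / p ≤ ⌊n / p⌋ + 1`, and the floors are controlled by Legendre's formula for `n!`
  have hterm : ∀ p ∈ n.primesLE, n * (log p / p) ≤ ((n / p : ℕ) : ℝ) * log p + log p := by
    intro p hp
    have hp0 : (0 : ℝ) < p := by exact_mod_cast (Nat.prime_of_mem_primesLE hp).pos
    have hdiv : (n : ℝ) / p ≤ ((n / p : ℕ) : ℝ) + 1 := by
      rw [div_le_iff₀ hp0]
      have := Nat.lt_div_mul_add (a := n) (Nat.prime_of_mem_primesLE hp).pos
      push_cast [add_mul, one_mul]
      exact_mod_cast this.le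
    calc n * (log p / p) = n / p * log p := by ring
      _ ≤ (((n / p : ℕ) : ℝ) + 1) * log p := by gcongr
      _ = _ := by ring
  have hfact : log n ! ≤ n * log n := by
    rw [← log_pow]
    exact log_le_log (by positivity) (by exact_mod_cast Nat.factorial_le_pow n)
  have htheta : ∑ p ∈ n.primesLE, log p ≤ n * log 4 := by
    rw [← Chebyshev.theta_eq_sum_primesLE_log, mul_comm]
    exact Chebyshev.theta_le_log4_mul_x hn'.le
  refine le_of_mul_le_mul_left ?_ hn'
  calc n * ∑ p ∈ n.primesLE, log p / p
      ≤ ∑ p ∈ n.primesLE, (((n / p : ℕ) : ℝ) * log p + log p) := by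
        rw [mul_sum]
        exact sum_le_sum hterm
    _ = ∑ p ∈ n.primesLE, ((n / p : ℕ) : ℝ) * log p + ∑ p ∈ n.primesLE, log p :=
        sum_add_distrib
    _ ≤ log n ! + n * log 4 := add_le_add (sum_primesLE_div_mul_log_le_log_factorial n) htheta
    _ ≤ n * (log n + log 4) := by linarith

lemma sum_range_mul_le_of_sum_range_le {a g B : ℕ → ℝ} (hg : Antitone g)
    (hg0 : ∀ n, 0 ≤ g n) (hB : ∀ n, ∑ m ∈ range (n + 1), a m ≤ B n) (N : ℕ) :
    ∑ m ∈ range (N + 1), a m * g m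
      ≤ B N * g N + ∑ n ∈ range N, B n * (g n - g (n + 1)) := by
  set A : ℕ → ℝ := fun n => ∑ m ∈ range (n + 1), a m
  have abel : ∀ N, ∑ m ∈ range (N + 1), a m * g m
      = A N * g N + ∑ n ∈ range N, A n * (g n - g (n + 1)) := by
    intro N
    induction N with
    | zero => simp [A]
    | succ N ih =>
      rw [sum_range_succ, ih, sum_range_succ _ N]
      simp only [A, sum_range_succ _ (N + 1)]
      ring
  rw [abel]
  gcongr with n
  · exact hg0 N
  · exact hB N
  · exact sub_nonneg.mpr (hg n.le_succ)
  · exact hB n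

lemma mul_inv_sub_inv_le_log_sub_log {u v : ℝ} (hu : 0 < u) (hv : 0 < v) :
    u * (u⁻¹ - v⁻¹) ≤ log v - log u := by
  have := one_sub_inv_le_log_of_pos (div_pos hv hu)
  rw [log_div hv.ne' hu.ne', inv_div] at this
  rwa [mul_sub, mul_inv_cancel₀ hu.ne', ← div_eq_mul_inv]

lemma log_four_div_log_two : log 4 / log 2 = 2 := by
  rw [show (4 : ℝ) = 2 ^ 2 by norm_num, log_pow]
  field_simp
  norm_num

lemma log_two_le_log_max_two (n : ℕ) : log 2 ≤ log (max n 2 : ℕ) :=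
  log_le_log two_pos (by exact_mod_cast le_max_right n 2)

lemma antitone_inv_log_max_two : Antitone fun n : ℕ => (log (max n 2 : ℕ))⁻¹ :=
  fun m n hmn => inv_anti₀ ((log_pos one_lt_two).trans_le (log_two_le_log_max_two m))
    (log_le_log (by positivity) (by exact_mod_cast max_le_max_right 2 hmn))

lemma sum_primesLE_inv_eq (N : ℕ) : ∑ p ∈ N.primesLE, (p : ℝ)⁻¹
    = ∑ m ∈ range (N + 1), (if m.Prime then log m / m else 0) * (log (max m 2 : ℕ))⁻¹ := by
  simp only [ite_mul, zero_mul]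
  rw [← sum_filter]
  refine sum_congr rfl fun p hp => ?_
  have hp := Nat.prime_of_mem_primesLE hp
  have : log p ≠ 0 := (log_pos (by exact_mod_cast hp.one_lt)).ne'
  rw [max_eq_left hp.two_le]
  field_simp

lemma sum_range_log_add_log_four_mul_le {N : ℕ} (hN : 2 ≤ N) :
    ∑ n ∈ range N,
        (log n + log 4) * ((log (max n 2 : ℕ))⁻¹ - (log (max (n + 1) 2 : ℕ))⁻¹)
      ≤ log (log N) - log (log 2) + 2 := by
  set ℓ : ℕ → ℝ := fun n => log (max n 2 : ℕ)
  have hℓpos : ∀ n, 0 < ℓ n := fun n =>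
    (log_pos one_lt_two).trans_le (log_two_le_log_max_two n)
  have hdiff : ∀ n, 0 ≤ (ℓ n)⁻¹ - (ℓ (n + 1))⁻¹ := fun n =>
    sub_nonneg.mpr (antitone_inv_log_max_two n.le_succ)
  have hlog : ∀ n : ℕ,
      log n * ((ℓ n)⁻¹ - (ℓ (n + 1))⁻¹) ≤ log (ℓ (n + 1)) - log (ℓ n) := by
    intro n
    refine le_trans (mul_le_mul_of_nonneg_right ?_ (hdiff n))
      (mul_inv_sub_inv_le_log_sub_log (hℓpos n) (hℓpos (n + 1)))
    rcases n.eq_zero_or_pos with rfl | hn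
    · simpa using (hℓpos 0).le
    · exact log_le_log (by exact_mod_cast hn) (by exact_mod_cast le_max_left n 2)
  have hℓ0 : ℓ 0 = log 2 := by simp [ℓ]
  have hℓN : ℓ N = log N := by simp [ℓ, hN]
  have hlog4 : log 4 * ((ℓ 0)⁻¹ - (ℓ N)⁻¹) ≤ 2 :=
    calc log 4 * ((ℓ 0)⁻¹ - (ℓ N)⁻¹) ≤ log 4 * (ℓ 0)⁻¹ :=
          mul_le_mul_of_nonneg_left (sub_le_self _ (inv_pos.mpr (hℓpos N)).le) (by positivity)
      _ = 2 := by rw [hℓ0, ← div_eq_mul_inv, log_four_div_log_two]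
  have htel := (sum_le_sum fun n _ => hlog n).trans_eq (sum_range_sub (fun n => log (ℓ n)) N)
  rw [hℓ0, hℓN] at htel
  simp only [add_mul, sum_add_distrib, ← mul_sum, sum_range_sub']
  linarith

theorem sum_primesLE_inv_le {N : ℕ} (hN : 2 ≤ N) :
    ∑ p ∈ N.primesLE, (p : ℝ)⁻¹ ≤ log (log N) + 5 - log (log 2) := by
  -- partial summation of `log p / p` against `1 / log p`; the weight is frozen below `2`
  -- to make it antitone on all of `ℕ`
  have hsum := sum_range_mul_le_of_sum_range_le
    (a := fun m => if m.Prime then log m / m else 0) (B := fun n => log n + log 4)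
    antitone_inv_log_max_two (fun n => by positivity)
    (fun n => by rw [← sum_filter]; exact sum_primesLE_log_div_le n) N
  have hlogN : (0 : ℝ) < log N := log_pos (by exact_mod_cast hN)
  have hfirst : (log N + log 4) * (log (max N 2 : ℕ))⁻¹ ≤ 3 := by
    have : log 4 / log N ≤ log 4 / log 2 :=
      div_le_div_of_nonneg_left (by positivity) (log_pos one_lt_two)
        (log_le_log two_pos (by exact_mod_cast hN))
    rw [max_eq_left hN, add_mul, mul_inv_cancel₀ hlogN.ne', ← div_eq_mul_inv]
    linarith [log_four_div_log_two]
  rw [sum_primesLE_inv_eq]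
  linarith [sum_range_log_add_log_four_mul_le hN]

lemma one_le_log_three_mul {x : ℝ} (hx : 1 ≤ x) : 1 ≤ log (3 * x) := by
  rw [le_log_iff_exp_le (by positivity)]
  linarith [exp_one_lt_d9]

lemma sum_primesLE_floor_inv_le {x : ℝ} (hx : 1 ≤ x) :
    ∑ p ∈ ⌊x⌋₊.primesLE, (p : ℝ)⁻¹ ≤ log (log (3 * x)) + 5 - log (log 2) := by
  have hloglog2 : log (log 2) < 0 := log_neg (log_pos one_lt_two) (by
    rw [log_lt_iff_lt_exp two_pos]; linarith [add_one_lt_exp one_ne_zero])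
  have hL : 0 ≤ log (log (3 * x)) := log_nonneg (one_le_log_three_mul hx)
  rcases lt_or_ge ⌊x⌋₊ 2 with hx2 | hx2
  · have : ⌊x⌋₊.primesLE = ∅ := by
      interval_cases h : ⌊x⌋₊ <;> simp
    rw [this, sum_empty]
    linarith
  · have hfl : (0 : ℝ) < log ⌊x⌋₊ := log_pos (by exact_mod_cast hx2)
    have : log (log ⌊x⌋₊) ≤ log (log (3 * x)) := by
      gcongr
      linarith [Nat.floor_le (zero_le_one.trans hx)]
    linarith [sum_primesLE_inv_le hx2]

noncomputable def sqfSum (B x : ℝ) : ℝ :=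
  ∑ d ∈ range (⌊x⌋₊ + 1) with Squarefree d, B ^ d.primeFactors.card / d

lemma sqfSum_le_prod {B : ℝ} (hB : 0 ≤ B) (x : ℝ) :
    sqfSum B x ≤ ∏ p ∈ ⌊x⌋₊.primesLE, (1 + B / p) := by
  set s := {d ∈ range (⌊x⌋₊ + 1) | Squarefree d}
  -- a squarefree `d` is determined by its set of prime factors, all of which are `≤ x`
  have hterm : ∀ d ∈ s, B ^ d.primeFactors.card / d = ∏ p ∈ d.primeFactors, B / p := by
    intro d hd
    rw [prod_div_distrib, prod_const, ← Nat.cast_prod,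
      Nat.prod_primeFactors_of_squarefree (mem_filter.mp hd).2]
  have hinj : Set.InjOn Nat.primeFactors s := fun d hd d' hd' h => by
    rw [← Nat.prod_primeFactors_of_squarefree (mem_filter.mp hd).2,
      ← Nat.prod_primeFactors_of_squarefree (mem_filter.mp hd').2, h]
  have hsub : s.image Nat.primeFactors ⊆ (⌊x⌋₊.primesLE).powerset := by
    simp only [subset_iff, mem_image, mem_powerset, s, mem_filter, mem_range]
    rintro _ ⟨d, ⟨hd, hsq⟩, rfl⟩ p hp
    exact Nat.mem_primesLE.mpr ⟨(Nat.le_of_mem_primeFactors hp).trans (by omega),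
      Nat.prime_of_mem_primeFactors hp⟩
  rw [sqfSum, sum_congr rfl hterm,
    ← sum_image (f := fun t : Finset ℕ => ∏ p ∈ t, B / (p : ℝ)) hinj, prod_one_add]
  exact sum_le_sum_of_subset_of_nonneg hsub fun t _ _ => prod_nonneg fun p _ => by positivity

lemma sqfSum_le_rpow {B : ℝ} (hB : 0 ≤ B) :
    ∃ C, 0 < C ∧ ∀ x, 1 ≤ x → sqfSum B x ≤ C * log (3 * x) ^ B := by
  refine ⟨exp (B * (5 - log (log 2))), exp_pos _, fun x hx => ?_⟩
  have hL := one_le_log_three_mul hx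
  calc sqfSum B x ≤ ∏ p ∈ ⌊x⌋₊.primesLE, (1 + B / p) := sqfSum_le_prod hB x
    _ ≤ exp (∑ p ∈ ⌊x⌋₊.primesLE, B / p) :=
        prod_one_add_le_exp_sum _ fun p => by positivity
    _ ≤ exp (B * (log (log (3 * x)) + 5 - log (log 2))) := by
        simp only [div_eq_mul_inv, ← mul_sum]
        gcongr
        exact sum_primesLE_floor_inv_le hx
    _ = exp (B * (5 - log (log 2))) * log (3 * x) ^ B := by
        rw [rpow_def_of_pos (by linarith), ← exp_add]
        ring_nf

open ArithmeticFunction in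
lemma pow_card_primeFactors_eq_sum_divisors {R : Type*} [CommRing R] (B : R) {n : ℕ}
    (hn : Squarefree n) :
    B ^ n.primeFactors.card = ∑ d ∈ n.divisors, (B - 1) ^ d.primeFactors.card := by
  have hf (d : ℕ) (hd : d ≠ 0) :
      prodPrimeFactors (fun _ => B - 1) d = (B - 1) ^ d.primeFactors.card := by
    rw [prodPrimeFactors_apply hd, prod_const]
  calc B ^ n.primeFactors.card
      = ∏ p ∈ n.primeFactors, (1 + prodPrimeFactors (fun _ => B - 1) p) := by
        rw [← prod_const]
        refine prod_congr rfl fun p hp => ?_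
        have hp := Nat.prime_of_mem_primeFactors hp
        rw [hf p hp.ne_zero, hp.primeFactors, card_singleton, pow_one, add_sub_cancel]
    _ = ∑ d ∈ n.divisors, prodPrimeFactors (fun _ => B - 1) d :=
        (IsMultiplicative.prodPrimeFactors _).prodPrimeFactors_one_add_of_squarefree hn
    _ = _ := sum_congr rfl fun d hd => hf d (Nat.pos_of_mem_divisors hd).ne'

lemma sum_pow_card_primeFactors_div_pow_eq (B : ℝ) (e : ℕ) {s D M : Finset ℕ}
    (hs : ∀ n ∈ s, Squarefree n) (hD : ∀ n ∈ s, ∀ d ∈ n.divisors, d ∈ D)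
    (hM : ∀ n ∈ s, ∀ m ∈ n.divisors, m ∈ M) :
    ∑ n ∈ s, B ^ n.primeFactors.card / (n : ℝ) ^ e
      = ∑ d ∈ D, (B - 1) ^ d.primeFactors.card / (d : ℝ) ^ e *
          ∑ m ∈ M with d * m ∈ s, ((m : ℝ) ^ e)⁻¹ := by
  set F : ℕ × ℕ → ℝ := fun p =>
    (B - 1) ^ p.1.primeFactors.card / (p.1 : ℝ) ^ e * ((p.2 : ℝ) ^ e)⁻¹
  set P := (D ×ˢ M).filter fun p => p.1 * p.2 ∈ s
  have hfiber : ∀ n ∈ s, P.filter (fun p => p.1 * p.2 = n) = n.divisorsAntidiagonal := by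
    intro n hn
    ext ⟨d, m⟩
    simp only [P, mem_filter, mem_product, Nat.mem_divisorsAntidiagonal]
    constructor
    · rintro ⟨-, rfl⟩
      exact ⟨rfl, (hs _ hn).ne_zero⟩
    · rintro ⟨rfl, h0⟩
      exact ⟨⟨⟨hD _ hn d (Nat.mem_divisors.mpr ⟨dvd_mul_right d m, h0⟩),
        hM _ hn m (Nat.mem_divisors.mpr ⟨dvd_mul_left m d, h0⟩)⟩, hn⟩, rfl⟩
  have hterm : ∀ n ∈ s, B ^ n.primeFactors.card / (n : ℝ) ^ e
      = ∑ p ∈ n.divisorsAntidiagonal, F p := by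
    intro n hn
    rw [pow_card_primeFactors_eq_sum_divisors B (hs n hn), sum_div,
      ← Nat.sum_divisorsAntidiagonal (fun d _ => (B - 1) ^ d.primeFactors.card / (n : ℝ) ^ e)]
    refine sum_congr rfl fun p hp => ?_
    rw [← (Nat.mem_divisorsAntidiagonal.mp hp).1]
    simp only [F, Nat.cast_mul, mul_pow, div_eq_mul_inv, mul_inv]
    ring
  calc ∑ n ∈ s, B ^ n.primeFactors.card / (n : ℝ) ^ e
      = ∑ n ∈ s, ∑ p ∈ P with p.1 * p.2 = n, F p :=
        sum_congr rfl fun n hn => by rw [hterm n hn, hfiber n hn]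
    _ = ∑ p ∈ P, F p := sum_fiberwise_of_maps_to (fun p hp => (mem_filter.mp hp).2) F
    _ = _ := by
        simp only [P, sum_filter, sum_product, mul_sum]
        refine sum_congr rfl fun d _ => sum_congr rfl fun m _ => ?_
        split_ifs <;> simp [F]

noncomputable def tailSum (B x : ℝ) (N : ℕ) : ℝ :=
  ∑ n ∈ range N with Squarefree n ∧ x < (n : ℕ), B ^ n.primeFactors.card / (n : ℝ) ^ 2

lemma sum_inv_sq_of_lt_le {y : ℝ} (hy : 0 ≤ y) (N : ℕ) :
    ∑ m ∈ range N with y < (m : ℕ), ((m : ℝ) ^ 2)⁻¹ ≤ 2 / (⌊y⌋₊ + 1) := by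
  refine le_trans (sum_le_sum_of_subset_of_nonneg (fun m hm => ?_) fun _ _ _ => by positivity)
    (sum_Ioo_inv_sq_le ⌊y⌋₊ N)
  rw [mem_filter, mem_range] at hm
  exact mem_Ioo.mpr ⟨(Nat.floor_lt hy).mpr hm.2, hm.1⟩

lemma two_div_floor_add_one_le {y : ℝ} (hy : 0 < y) : 2 / ((⌊y⌋₊ : ℝ) + 1) ≤ 2 / y :=
  div_le_div_of_nonneg_left zero_le_two hy (Nat.lt_floor_add_one y).le

lemma tailSum_le_of_le_one {B x : ℝ} (hB₀ : 0 ≤ B) (hB₁ : B ≤ 1) (hx : 0 < x) (N : ℕ) :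
    tailSum B x N ≤ 2 / x := by
  calc tailSum B x N
      ≤ ∑ n ∈ range N with Squarefree n ∧ x < (n : ℕ), ((n : ℝ) ^ 2)⁻¹ :=
        sum_le_sum fun n _ => by
          rw [div_eq_mul_inv]
          exact mul_le_of_le_one_left (by positivity) (pow_le_one₀ hB₀ hB₁)
    _ ≤ ∑ n ∈ range N with x < (n : ℕ), ((n : ℝ) ^ 2)⁻¹ :=
        sum_le_sum_of_subset_of_nonneg (monotone_filter_right _ fun _ _ h => h.2)
          fun _ _ _ => by positivity
    _ ≤ 2 / x := (sum_inv_sq_of_lt_le hx.le N).trans (two_div_floor_add_one_le hx)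

lemma tailSum_le_sqfSum_add_tailSum {B x : ℝ} (hB : 1 ≤ B) (hx : 0 < x) (N : ℕ) :
    tailSum B x N ≤ 2 / x * sqfSum (B - 1) x + 2 * tailSum (B - 1) x N := by
  set s := {n ∈ range N | Squarefree n ∧ x < (n : ℕ)}
  set c : ℕ → ℝ := fun d => (B - 1) ^ d.primeFactors.card / (d : ℝ) ^ 2
  set I : ℕ → ℝ := fun d => ∑ m ∈ range N with d * m ∈ s, ((m : ℝ) ^ 2)⁻¹
  have hB : 0 ≤ B - 1 := by linarith
  have hc : ∀ d, 0 ≤ c d := fun d => by positivity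
  have hconv : tailSum B x N = ∑ d ∈ range N with Squarefree d, c d * I d := by
    refine sum_pow_card_primeFactors_div_pow_eq B 2 (fun n hn => (mem_filter.mp hn).2.1)
      (fun n hn d hd => ?_) (fun n hn m hm => ?_)
    · simp only [mem_filter, mem_range] at hn ⊢
      exact ⟨(Nat.divisor_le hd).trans_lt hn.1,
        hn.2.1.squarefree_of_dvd (Nat.dvd_of_mem_divisors hd)⟩
    · exact mem_range.mpr ((Nat.divisor_le hm).trans_lt (mem_range.mp (mem_filter.mp hn).1))
  have hI : ∀ d : ℕ, 0 < d → I d ≤ 2 / (⌊x / d⌋₊ + 1) := fun d hd =>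
    le_trans (sum_le_sum_of_subset_of_nonneg (monotone_filter_right _ fun m _ hm => by
        rw [div_lt_iff₀' (by exact_mod_cast hd)]
        exact_mod_cast (mem_filter.mp hm).2.2)
      fun _ _ _ => by positivity) (sum_inv_sq_of_lt_le (by positivity) N)
  have hsmall : ∀ d ∈ {d ∈ range N | Squarefree d ∧ (d : ℕ) ≤ x},
      c d * I d ≤ 2 / x * ((B - 1) ^ d.primeFactors.card / d) := by
    intro d hd
    have hd0 := (mem_filter.mp hd).2.1.ne_zero.bot_lt
    have hd0' : (0 : ℝ) < d := by exact_mod_cast hd0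
    calc c d * I d ≤ c d * (2 / (x / d)) :=
          mul_le_mul_of_nonneg_left ((hI d hd0).trans (two_div_floor_add_one_le (by positivity)))
            (hc d)
      _ = 2 / x * ((B - 1) ^ d.primeFactors.card / d) := by
          simp only [c]
          field_simp
  have hlarge : ∀ d ∈ {d ∈ range N | Squarefree d ∧ ¬ (d : ℕ) ≤ x},
      c d * I d ≤ 2 * c d := by
    intro d hd
    rw [mul_comm 2]
    refine mul_le_mul_of_nonneg_left ((hI d (mem_filter.mp hd).2.1.ne_zero.bot_lt).trans ?_)
      (hc d)
    exact div_le_self zero_le_two (by simp)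
  rw [hconv, ← sum_filter_add_sum_filter_not _ fun d : ℕ => (d : ℝ) ≤ x, filter_filter,
    filter_filter]
  gcongr ?_ + ?_
  · rw [sqfSum, mul_sum]
    refine (sum_le_sum hsmall).trans (sum_le_sum_of_subset_of_nonneg (fun d hd => ?_)
      fun _ _ _ => by positivity)
    simp only [mem_filter, mem_range] at hd ⊢
    exact ⟨Nat.lt_succ_of_le (Nat.le_floor hd.2.2), hd.2.1⟩
  · simp only [tailSum, mul_sum, not_le] at hlarge ⊢
    exact sum_le_sum hlarge

lemma Real.induction_on_sub_one {P : ℝ → Prop} (base : ∀ t, 0 ≤ t → t ≤ 1 → P t)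
    (step : ∀ t, 1 < t → P (t - 1) → P t) {t : ℝ} (ht : 0 ≤ t) : P t := by
  suffices ∀ k : ℕ, ∀ t : ℝ, 0 ≤ t → t ≤ k + 1 → P t from
    this ⌈t⌉₊ t ht (by linarith [Nat.le_ceil t])
  intro k
  induction k with
  | zero => exact fun t ht h1 => base t ht (by simpa using h1)
  | succ k ih =>
    intro t ht htk
    rcases le_or_gt t 1 with h1 | h1
    · exact base t ht h1
    · exact step t h1 (ih _ (by linarith) (by push_cast at htk; linarith))

lemma tailSum_le_of_tailSum_sub_one_le {B C₁ C₂ : ℝ} (hB : 1 ≤ B)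
    (hS : ∀ x, 1 ≤ x → sqfSum (B - 1) x ≤ C₁ * log (3 * x) ^ (B - 1))
    (hT : ∀ x, 1 ≤ x → ∀ N, tailSum (B - 1) x N ≤ C₂ * log (3 * x) ^ (B - 1) / x)
    {x : ℝ} (hx : 1 ≤ x) (N : ℕ) :
    tailSum B x N ≤ (2 * C₁ + 2 * C₂) * log (3 * x) ^ (B - 1) / x := by
  have hx0 : 0 < x := by linarith
  calc tailSum B x N ≤ 2 / x * sqfSum (B - 1) x + 2 * tailSum (B - 1) x N :=
        tailSum_le_sqfSum_add_tailSum hB hx0 N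
    _ ≤ 2 / x * (C₁ * log (3 * x) ^ (B - 1)) + 2 * (C₂ * log (3 * x) ^ (B - 1) / x) := by
        gcongr
        · exact hS x hx
        · exact hT x hx N
    _ = (2 * C₁ + 2 * C₂) * log (3 * x) ^ (B - 1) / x := by ring

lemma tailSum_le_rpow {B : ℝ} (hB : 0 ≤ B) :
    ∃ C, 0 < C ∧ ∀ x, 1 ≤ x → ∀ N, tailSum B x N ≤ C * log (3 * x) ^ B / x := by
  refine Real.induction_on_sub_one (P := fun B => ∃ C, 0 < C ∧ ∀ x, 1 ≤ x → ∀ N,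
    tailSum B x N ≤ C * log (3 * x) ^ B / x) (fun B hB₀ hB₁ => ?_) (fun B hB ih => ?_) hB
  · refine ⟨2, two_pos, fun x hx N =>
      (tailSum_le_of_le_one hB₀ hB₁ (by linarith) N).trans ?_⟩
    gcongr
    exact le_mul_of_one_le_right zero_le_two (one_le_rpow (one_le_log_three_mul hx) hB₀)
  · obtain ⟨C₁, hC₁, hS⟩ := sqfSum_le_rpow (B := B - 1) (by linarith)
    obtain ⟨C₂, hC₂, hT⟩ := ih
    refine ⟨2 * C₁ + 2 * C₂, by positivity, fun x hx N =>
      (tailSum_le_of_tailSum_sub_one_le hB.le hS hT hx N).trans ?_⟩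
    gcongr
    · exact one_le_log_three_mul hx
    · linarith

/-- For fixed `A ≥ 1`, the sum over squarefree `n > x` of `A^ω(n)/n²` is
`O_A((log 3x)^(A-1)/x)`. -/
theorem squarefree_tail_sum_bound (A : ℝ) (hA : 1 ≤ A) :
    ∃ C : ℝ, 0 < C ∧ ∀ x : ℝ, 1 ≤ x →
      (∑' n : ℕ, if Squarefree n ∧ x < (n : ℝ) then
          A ^ n.primeFactors.card / (n : ℝ) ^ 2 else 0)
        ≤ C * (Real.log (3 * x)) ^ (A - 1) / x := by
  obtain ⟨C₁, hC₁, hS⟩ := sqfSum_le_rpow (B := A - 1) (by linarith)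
  obtain ⟨C₂, hC₂, hT⟩ := tailSum_le_rpow (B := A - 1) (by linarith)
  refine ⟨2 * C₁ + 2 * C₂, by positivity, fun x hx => ?_⟩
  refine Real.tsum_le_of_sum_range_le (fun n => ?_) fun N => ?_
  · have : 0 ≤ A := by linarith
    split_ifs <;> positivity
  · rw [← sum_filter]
    exact tailSum_le_of_tailSum_sub_one_le hA hS hT hx N
end

section
/- For any squarefree positive integer m and real y ≥ 1, the sum of 1/n over integers n > y² with rad(n) = m is O(1/y), where rad(n) is the product of distinct primes dividing n. -/
/-! For `n > y²` we have `1/n ≤ y⁻¹ n^(-1/2)`, so it suffices to bound `∑_{rad n = m} n^(-1/2)`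
uniformly in `m`. For squarefree `m` the numbers of radical `m` are the `m k` with `k` composed of
primes dividing `m`, so by the Euler product this sum equals
`m^(-1/2) ∏_{p ∣ m} (1 - p^(-1/2))⁻¹ = ∏_{p ∣ m} (√p - 1)⁻¹`. Each factor is at most `3`, and at
most `1` once `p ≥ 4`, so the product is at most `3⁴`. -/

open Finset

lemma Finset.prod_le_pow_card_of_le_one_of_notMem {ι R : Type*} [CommSemiring R] [PartialOrder R]
    [IsOrderedRing R] {s t : Finset ι} {f : ι → R} {c : R} (hc : 1 ≤ c)
    (h0 : ∀ i ∈ s, 0 ≤ f i) (hle : ∀ i ∈ s, f i ≤ c) (hle_one : ∀ i ∈ s, i ∉ t → f i ≤ 1) :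
    ∏ i ∈ s, f i ≤ c ^ #t := by
  classical
  have hin : ∏ i ∈ s with i ∈ t, f i ≤ c ^ #t :=
    calc ∏ i ∈ s with i ∈ t, f i ≤ ∏ i ∈ s with i ∈ t, c :=
          prod_le_prod (fun i hi ↦ h0 i (mem_filter.1 hi).1) fun i hi ↦ hle i (mem_filter.1 hi).1
      _ = c ^ #{i ∈ s | i ∈ t} := prod_const c
      _ ≤ c ^ #t := pow_le_pow_right₀ hc (card_le_card fun i hi ↦ (mem_filter.1 hi).2)
  have hout : ∏ i ∈ s with i ∉ t, f i ≤ 1 :=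
    prod_le_one (fun i hi ↦ h0 i (mem_filter.1 hi).1)
      fun i hi ↦ hle_one i (mem_filter.1 hi).1 (mem_filter.1 hi).2
  rw [← prod_filter_mul_prod_filter_not s (· ∈ t)]
  exact (mul_le_of_le_one_right (prod_nonneg fun i hi ↦ h0 i (mem_filter.1 hi).1) hout).trans hin

lemma one_div_le_inv_mul_inv_sqrt {x y : ℝ} (hy : 0 < y) (hxy : y ^ 2 < x) :
    1 / x ≤ y⁻¹ * (√x)⁻¹ := by
  have hyx : y < √x := Real.lt_sqrt_of_sq_lt hxy
  calc 1 / x = (√x)⁻¹ * (√x)⁻¹ := by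
        rw [one_div, ← mul_inv, Real.mul_self_sqrt (by nlinarith)]
    _ ≤ y⁻¹ * (√x)⁻¹ := by gcongr

lemma inv_mul_inv_one_sub_inv {x : ℝ} (hx : x ≠ 0) : x⁻¹ * (1 - x⁻¹)⁻¹ = (x - 1)⁻¹ := by
  rw [← mul_inv, mul_sub, mul_one, mul_inv_cancel₀ hx]

lemma inv_sqrt_sub_one_le_three {x : ℝ} (hx : 2 ≤ x) : (√x - 1)⁻¹ ≤ 3 := by
  have : 4 / 3 ≤ √x := Real.le_sqrt_of_sq_le (by linarith)
  rw [inv_le_comm₀ (by linarith) (by norm_num)]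
  linarith

lemma inv_sqrt_sub_one_le_one {x : ℝ} (hx : 4 ≤ x) : (√x - 1)⁻¹ ≤ 1 := by
  have : 2 ≤ √x := Real.le_sqrt_of_sq_le (by linarith)
  exact inv_le_one_of_one_le₀ (by linarith)

namespace Nat

noncomputable def invSqrtHom : ℕ →* ℝ where
  toFun n := (√(n : ℝ))⁻¹
  map_one' := by simp
  map_mul' a b := by
    push_cast
    rw [Real.sqrt_mul (by positivity), mul_inv]

lemma invSqrtHom_apply (n : ℕ) : invSqrtHom n = (√(n : ℝ))⁻¹ := rfl

lemma norm_invSqrtHom_lt_one {n : ℕ} (hn : 1 < n) : ‖invSqrtHom n‖ < 1 := by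
  have : 1 < √(n : ℝ) := Real.lt_sqrt_of_sq_lt (by norm_cast)
  rw [invSqrtHom_apply, Real.norm_of_nonneg (by positivity)]
  exact inv_lt_one_of_one_lt₀ this

lemma hasSum_indicator_factoredNumbers_inv_sqrt {s : Finset ℕ} (hs : ∀ p ∈ s, p.Prime) :
    HasSum ((factoredNumbers s).indicator fun n ↦ (√(n : ℝ))⁻¹)
      (∏ p ∈ s, (1 - (√(p : ℝ))⁻¹)⁻¹) := by
  have h := (EulerProduct.summable_and_hasSum_factoredNumbers_prod_filter_prime_geometric
    (fun hp ↦ norm_invSqrtHom_lt_one hp.one_lt) s).2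
  rw [filter_true_of_mem hs] at h
  exact (hasSum_subtype_iff_indicator.1 h :)

lemma mul_pos_and_radical_eq_iff {m : ℕ} (hm : Squarefree m) (k : ℕ) :
    (0 < m * k ∧ ∏ p ∈ (m * k).primeFactors, p = m) ↔ k ∈ factoredNumbers m.primeFactors := by
  rw [mem_factoredNumbers_iff_primeFactors_subset]
  constructor
  · rintro ⟨hpos, hrad⟩
    have hmk : (m * k).primeFactors = m.primeFactors := by
      conv_rhs => rw [← hrad]
      rw [primeFactors_prod fun p hp ↦ prime_of_mem_primeFactors hp]
    exact ⟨right_ne_zero_of_mul hpos.ne', hmk ▸ primeFactors_mono (dvd_mul_left k m) hpos.ne'⟩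
  · rintro ⟨hk, hsub⟩
    refine ⟨Nat.pos_of_ne_zero (mul_ne_zero hm.ne_zero hk), ?_⟩
    rw [primeFactors_mul hm.ne_zero hk, union_eq_left.2 hsub, prod_primeFactors_of_squarefree hm]

lemma inv_sqrt_eq_prod_primeFactors {m : ℕ} (hm : Squarefree m) :
    (√(m : ℝ))⁻¹ = ∏ p ∈ m.primeFactors, (√(p : ℝ))⁻¹ := by
  simpa [invSqrtHom_apply, prod_primeFactors_of_squarefree hm] using
    map_prod invSqrtHom (fun p ↦ p) m.primeFactors

lemma hasSum_inv_sqrt_of_radical_eq {m : ℕ} (hm : Squarefree m) :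
    HasSum (fun n : ℕ ↦ if 0 < n ∧ ∏ p ∈ n.primeFactors, p = m then (√(n : ℝ))⁻¹ else 0)
      (∏ p ∈ m.primeFactors, (√(p : ℝ) - 1)⁻¹) := by
  have hmul_inj : Function.Injective (m * ·) := mul_right_injective₀ hm.ne_zero
  rw [← hmul_inj.hasSum_iff]
  · have hcomp : (fun n : ℕ ↦ if 0 < n ∧ ∏ p ∈ n.primeFactors, p = m then (√(n : ℝ))⁻¹ else 0) ∘
        (m * ·) = fun k ↦ (√(m : ℝ))⁻¹ * (factoredNumbers m.primeFactors).indicator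
          (fun n ↦ (√(n : ℝ))⁻¹) k := by
      ext k
      simp only [Function.comp_apply, Set.indicator_apply, mul_pos_and_radical_eq_iff hm]
      split_ifs <;> simp [mul_comm]
    have hval : (√(m : ℝ))⁻¹ * ∏ p ∈ m.primeFactors, (1 - (√(p : ℝ))⁻¹)⁻¹ =
        ∏ p ∈ m.primeFactors, (√(p : ℝ) - 1)⁻¹ := by
      rw [inv_sqrt_eq_prod_primeFactors hm, ← prod_mul_distrib]
      exact prod_congr rfl fun p hp ↦ inv_mul_inv_one_sub_inv
        (Real.sqrt_ne_zero'.2 (by exact_mod_cast (prime_of_mem_primeFactors hp).pos))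
    rw [hcomp, ← hval]
    exact (hasSum_indicator_factoredNumbers_inv_sqrt
      fun p hp ↦ prime_of_mem_primeFactors hp).mul_left _
  · intro n hn
    rw [if_neg]
    rintro ⟨-, hrad⟩
    exact hn ⟨n / m, Nat.mul_div_cancel' (hrad ▸ prod_primeFactors_dvd n)⟩

lemma prod_primeFactors_inv_sqrt_sub_one_le (m : ℕ) :
    ∏ p ∈ m.primeFactors, (√(p : ℝ) - 1)⁻¹ ≤ 81 := by
  have h2 : ∀ p ∈ m.primeFactors, (2 : ℝ) ≤ p := fun p hp ↦ by
    exact_mod_cast (prime_of_mem_primeFactors hp).two_le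
  calc ∏ p ∈ m.primeFactors, (√(p : ℝ) - 1)⁻¹ ≤ 3 ^ #(range 4) :=
        prod_le_pow_card_of_le_one_of_notMem (by norm_num)
          (fun p hp ↦ inv_nonneg.2 (sub_nonneg.2 (Real.one_le_sqrt.2 (by linarith [h2 p hp]))))
          (fun p hp ↦ inv_sqrt_sub_one_le_three (h2 p hp))
          fun p _ hp ↦ inv_sqrt_sub_one_le_one (by exact_mod_cast not_lt.1 (mt mem_range.2 hp))
    _ = 81 := by norm_num

end Nat

/-- Uniformly for squarefree positive integers `m` and `y ≥ 1`, the sum of `1/n` over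
`n > y²` with `rad(n) = m` is `O(1/y)`. -/
theorem radical_tail_sum_bound :
    ∃ C : ℝ, 0 < C ∧ ∀ m : ℕ, Squarefree m → ∀ y : ℝ, 1 ≤ y →
      (∑' n : ℕ, if 0 < n ∧ y ^ 2 < (n : ℝ) ∧ (∏ p ∈ n.primeFactors, p) = m then
          1 / (n : ℝ) else 0)
        ≤ C / y := by
  refine ⟨81, by norm_num, fun m hm y hy ↦ ?_⟩
  have hy0 : 0 < y := one_pos.trans_le hy
  have hG := Nat.hasSum_inv_sqrt_of_radical_eq hm
  have hterm : ∀ n : ℕ,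
      (if 0 < n ∧ y ^ 2 < (n : ℝ) ∧ (∏ p ∈ n.primeFactors, p) = m then 1 / (n : ℝ) else 0) ≤
        y⁻¹ * if 0 < n ∧ ∏ p ∈ n.primeFactors, p = m then (√(n : ℝ))⁻¹ else 0 := fun n ↦ by
    by_cases hn : 0 < n ∧ ∏ p ∈ n.primeFactors, p = m
    · rw [if_pos hn]
      split_ifs with h
      · exact one_div_le_inv_mul_inv_sqrt hy0 h.2.1
      · positivity
    · rw [if_neg fun h ↦ hn ⟨h.1, h.2.2⟩, if_neg hn, mul_zero]
  have hG' := hG.summable.mul_left y⁻¹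
  calc _ ≤ ∑' n : ℕ, y⁻¹ * if 0 < n ∧ ∏ p ∈ n.primeFactors, p = m then (√(n : ℝ))⁻¹ else 0 :=
        (hG'.of_nonneg_of_le (fun n ↦ by split_ifs <;> positivity) hterm).tsum_le_tsum hterm hG'
    _ = y⁻¹ * ∏ p ∈ m.primeFactors, (√(p : ℝ) - 1)⁻¹ := by rw [tsum_mul_left, hG.tsum_eq]
    _ ≤ y⁻¹ * 81 := by gcongr; exact Nat.prod_primeFactors_inv_sqrt_sub_one_le m
    _ = 81 / y := by ring
end

section
/- Let k ≥ 1 be an integer, p ≡ 3 (mod 4) a prime with p ≥ k, and let h₁,...,h_k be integers pairwise incongruent mod p. Define δ_h(p) := lim_{α→∞} p^{−α} #{0 ≤ a < p^α : a + h_i ≡ sum of two squares (mod p^α) for all i}. Then δ_h(p) = (1 + 1/p)^{−1}(1 − (k−1)/p). -/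
/-!
For `p ≡ 3 (mod 4)` every residue prime to `p` is a sum of two squares mod `p^α` (Hensel lifting
from `ZMod p`, where every element is one), while `p ∣ b² + c²` forces `p ∣ b` and `p ∣ c`; so a
multiple of `p` is a sum of two squares mod `p^(α+2)` exactly when it is `p²` times one mod `p^α`.
Hence the number `V(α)` of non-units of `ZMod (p^α)` that are sums of two squares satisfies
`V(α+2) = φ(p^α) + V(α)`, and `V(α)/p^α → 1/(p(p+1))`. As the `h_i` are distinct mod `p`, at most
one `a + h_i` is a non-unit, so the number of admissible `a` is `p^α - k p^(α-1) + k V(α)`.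
-/

open Filter Finset
open scoped Classical

def IsSumTwoSq {R : Type*} [Semiring R] (x : R) : Prop :=
  ∃ a b : R, a ^ 2 + b ^ 2 = x

theorem ZMod.isSumTwoSq_intCast_iff {m : ℕ} {n : ℤ} :
    IsSumTwoSq (n : ZMod m) ↔ ∃ b c : ℤ, n ≡ b ^ 2 + c ^ 2 [ZMOD m] := by
  constructor
  · rintro ⟨a, b, hab⟩
    obtain ⟨a, rfl⟩ := ZMod.intCast_surjective a
    obtain ⟨b, rfl⟩ := ZMod.intCast_surjective b
    exact ⟨a, b, (ZMod.intCast_eq_intCast_iff _ _ _).1 (by push_cast; exact hab.symm)⟩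
  · rintro ⟨b, c, hbc⟩
    exact ⟨b, c, by exact_mod_cast ((ZMod.intCast_eq_intCast_iff _ _ _).2 hbc).symm⟩

namespace Int

theorem exists_modEq_pow_succ_sq_add_sq {p n b c : ℤ} {α : ℕ} (hb : IsCoprime (2 * b) p)
    (h : n ≡ b ^ 2 + c ^ 2 [ZMOD p ^ (α + 1)]) :
    ∃ t, n ≡ (b + t * p ^ (α + 1)) ^ 2 + c ^ 2 [ZMOD p ^ (α + 2)] := by
  obtain ⟨m, hm⟩ := h.symm.dvd
  obtain ⟨u, v, huv⟩ := hb
  refine ⟨u * m, Int.modEq_iff_dvd.2 ⟨u ^ 2 * m ^ 2 * p ^ α - m * v, ?_⟩⟩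
  linear_combination (-1 : ℤ) * hm + p ^ (α + 1) * m * huv

theorem exists_modEq_pow_sq_add_sq_of_isCoprime {p n b c : ℤ} (hb : IsCoprime (2 * b) p)
    (h : n ≡ b ^ 2 + c ^ 2 [ZMOD p]) (α : ℕ) : ∃ b' c' : ℤ, n ≡ b' ^ 2 + c' ^ 2 [ZMOD p ^ α] := by
  suffices ∀ α : ℕ, ∃ b', IsCoprime (2 * b') p ∧ n ≡ b' ^ 2 + c ^ 2 [ZMOD p ^ (α + 1)] by
    cases α with
    | zero => exact ⟨0, 0, by simp [Int.modEq_one]⟩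
    | succ α => obtain ⟨b', -, hb'⟩ := this α; exact ⟨b', c, hb'⟩
  intro α
  induction α with
  | zero => exact ⟨b, hb, by simpa using h⟩
  | succ α ih =>
    obtain ⟨b', hb', h'⟩ := ih
    obtain ⟨t, ht⟩ := exists_modEq_pow_succ_sq_add_sq hb' h'
    refine ⟨b' + t * p ^ (α + 1), ?_, ht⟩
    rw [show 2 * (b' + t * p ^ (α + 1)) = 2 * b' + p * (2 * t * p ^ α) by ring]
    exact IsCoprime.add_mul_left_left_iff.2 hb'

theorem exists_modEq_pow_sq_add_sq_of_not_dvd {p : ℕ} [Fact p.Prime] (hp2 : p ≠ 2) {n : ℤ}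
    (hn : ¬ (p : ℤ) ∣ n) (α : ℕ) : ∃ b c : ℤ, n ≡ b ^ 2 + c ^ 2 [ZMOD (p : ℤ) ^ α] := by
  have hirr : Irreducible (p : ℤ) := (Nat.prime_iff_prime_int.1 Fact.out).irreducible
  have coprime_of_not_dvd {b : ℤ} (hb : ¬ (p : ℤ) ∣ b) : IsCoprime (2 * b) p := by
    refine IsCoprime.mul_left (hirr.coprime_iff_not_dvd.2 ?_).symm
      (hirr.coprime_iff_not_dvd.2 hb).symm
    exact_mod_cast fun h2 ↦ hp2 ((Nat.prime_dvd_prime_iff_eq Fact.out Nat.prime_two).1 h2)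
  obtain ⟨b, c, hbc⟩ := (ZMod.isSumTwoSq_intCast_iff (m := p) (n := n)).1 (ZMod.sq_add_sq p _)
  by_cases hb : (p : ℤ) ∣ b
  · have hc : ¬ (p : ℤ) ∣ c := fun hc ↦
      hn ((hbc.symm.dvd_iff).1 (dvd_add (dvd_pow hb two_ne_zero) (dvd_pow hc two_ne_zero)))
    exact exists_modEq_pow_sq_add_sq_of_isCoprime (coprime_of_not_dvd hc) (by rwa [add_comm]) α
  · exact exists_modEq_pow_sq_add_sq_of_isCoprime (coprime_of_not_dvd hb) hbc α

end Int

theorem ZMod.sq_add_sq_eq_zero_iff {p : ℕ} [Fact p.Prime] (hp3 : p % 4 = 3) {x y : ZMod p} :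
    x ^ 2 + y ^ 2 = 0 ↔ x = 0 ∧ y = 0 := by
  refine ⟨fun h ↦ ⟨?_, ?_⟩, by rintro ⟨rfl, rfl⟩; ring⟩
  · by_contra hx
    exact ZMod.mod_four_ne_three_of_sq_eq_neg_sq hx (eq_neg_of_add_eq_zero_left h) hp3
  · by_contra hy
    exact ZMod.mod_four_ne_three_of_sq_eq_neg_sq' hy (eq_neg_of_add_eq_zero_left h) hp3

theorem Int.exists_eq_sq_mul_of_modEq_sq_add_sq {p : ℕ} [Fact p.Prime] (hp3 : p % 4 = 3)
    {n b c : ℤ} {α : ℕ} (hn : (p : ℤ) ∣ n) (h : n ≡ b ^ 2 + c ^ 2 [ZMOD (p : ℤ) ^ (α + 2)]) :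
    ∃ m b' c' : ℤ, n = (p : ℤ) ^ 2 * m ∧ m ≡ b' ^ 2 + c' ^ 2 [ZMOD (p : ℤ) ^ α] := by
  have hbc : (p : ℤ) ∣ b ^ 2 + c ^ 2 := (h.of_dvd (dvd_pow_self _ (by omega))).dvd_iff.1 hn
  simp only [← ZMod.intCast_zmod_eq_zero_iff_dvd] at hbc ⊢
  push_cast at hbc
  obtain ⟨hb, hc⟩ := (ZMod.sq_add_sq_eq_zero_iff hp3).1 hbc
  obtain ⟨b', rfl⟩ := (ZMod.intCast_zmod_eq_zero_iff_dvd _ _).1 hb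
  obtain ⟨c', rfl⟩ := (ZMod.intCast_zmod_eq_zero_iff_dvd _ _).1 hc
  obtain ⟨m, rfl⟩ : (p : ℤ) ^ 2 ∣ n :=
    (h.of_dvd (pow_dvd_pow _ (by omega))).dvd_iff.2 ⟨b' ^ 2 + c' ^ 2, by ring⟩
  have hp2 : (p : ℤ) ^ 2 ≠ 0 := by simp [(Fact.out : p.Prime).ne_zero]
  refine ⟨m, b', c', rfl, Int.ModEq.mul_left_cancel' hp2 ?_⟩
  convert h using 1 <;> ring

theorem ZMod.isUnit_intCast_iff_not_dvd_pow {p d : ℕ} {n : ℤ} (hp : p.Prime) (hd : 0 < d) :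
    IsUnit (n : ZMod (p ^ d)) ↔ ¬ (p : ℤ) ∣ n := by
  rw [Int.natCast_dvd, ← isUnit_natCast_iff_not_dvd_pow hp hd]
  rcases Int.natAbs_eq n with hn | hn <;> conv_lhs => rw [hn]
  · simp
  · simp [IsUnit.neg_iff]

theorem ZMod.isSumTwoSq_of_isUnit {p : ℕ} [Fact p.Prime] (hp2 : p ≠ 2) {α : ℕ}
    {x : ZMod (p ^ α)} (hx : IsUnit x) : IsSumTwoSq x := by
  rcases Nat.eq_zero_or_pos α with rfl | hα
  · exact ⟨0, 0, Subsingleton.elim (α := ZMod 1) _ _⟩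
  obtain ⟨n, rfl⟩ := ZMod.intCast_surjective x
  refine isSumTwoSq_intCast_iff.2 ?_
  exact_mod_cast Int.exists_modEq_pow_sq_add_sq_of_not_dvd hp2
    ((isUnit_intCast_iff_not_dvd_pow Fact.out hα).1 hx) α

theorem Finset.card_filter_forall_add_mem_imp_mem_add_mul {G ι : Type*} [AddGroup G] [Fintype G]
    [Fintype ι] {B C : Finset G} (hCB : C ⊆ B) (h : ι → G)
    (hB : ∀ x i j, x + h i ∈ B → x + h j ∈ B → i = j) :
    #{x | ∀ i, x + h i ∈ B → x + h i ∈ C} + Fintype.card ι * #B =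
      Fintype.card G + Fintype.card ι * #C := by
  let T (i : ι) : Finset G := B.map (Equiv.subRight (h i)).toEmbedding
  let U (i : ι) : Finset G := C.map (Equiv.subRight (h i)).toEmbedding
  have memT {x i} : x ∈ T i ↔ x + h i ∈ B := by simp [T, mem_map_equiv]
  have memU {x i} : x ∈ U i ↔ x + h i ∈ C := by simp [U, mem_map_equiv]
  have hT : Set.PairwiseDisjoint ↑(univ : Finset ι) T := fun i _ j _ hij ↦
    disjoint_left.2 fun x hi hj ↦ hij (hB x i j (memT.1 hi) (memT.1 hj))
  have hU : Set.PairwiseDisjoint ↑(univ : Finset ι) U := fun i _ j _ hij ↦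
    disjoint_left.2 fun x hi hj ↦ hij (hB x i j (hCB (memU.1 hi)) (hCB (memU.1 hj)))
  have hgood : ({x | ∀ i, x + h i ∈ B → x + h i ∈ C} : Finset G) =
      (univ \ univ.biUnion T) ∪ univ.biUnion U := by
    ext x
    simp only [mem_filter, mem_univ, true_and, mem_union, mem_sdiff, mem_biUnion, memT, memU]
    constructor
    · intro hx
      by_cases hxB : ∃ i, x + h i ∈ B
      · obtain ⟨i, hi⟩ := hxB
        exact Or.inr ⟨i, hx i hi⟩
      · exact Or.inl hxB
    · rintro (hx | ⟨i, hi⟩) j hj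
      · exact absurd ⟨j, hj⟩ hx
      · rwa [hB x j i hj (hCB hi)]
  have hdisj : Disjoint (univ \ univ.biUnion T) (univ.biUnion U) := by
    refine disjoint_left.2 fun x hx hxU ↦ (mem_sdiff.1 hx).2 ?_
    obtain ⟨i, -, hi⟩ := mem_biUnion.1 hxU
    exact mem_biUnion.2 ⟨i, mem_univ _, memT.2 (hCB (memU.1 hi))⟩
  have hcardT : #(univ.biUnion T) = Fintype.card ι * #B := by simp [card_biUnion hT, T]
  have hcardU : #(univ.biUnion U) = Fintype.card ι * #C := by simp [card_biUnion hU, U]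
  have hcompl := card_sdiff_add_card_eq_card (subset_univ (univ.biUnion T))
  rw [hgood, card_union_of_disjoint hdisj, ← hcardT, ← hcardU, ← card_univ]
  omega

theorem ZMod.ncard_setOf_lt_and_eq_card_filter (m : ℕ) [NeZero m] (P : ZMod m → Prop)
    [DecidablePred P] :
    {a : ℕ | a < m ∧ P a}.ncard = #{x : ZMod m | P x} := by
  rw [← card_image_of_injective _ (ZMod.val_injective m), ← Set.ncard_coe_finset]
  congr 1
  ext a
  simp only [Set.mem_ofPred_eq, coe_image, coe_filter, Set.mem_image, mem_univ, true_and]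
  constructor
  · rintro ⟨ha, hP⟩
    exact ⟨a, hP, ZMod.val_cast_of_lt ha⟩
  · rintro ⟨x, hx, rfl⟩
    exact ⟨ZMod.val_lt x, by rwa [ZMod.natCast_zmod_val]⟩

theorem ZMod.ncard_setOf_lt_and_forall_modEq_sq_add_sq (m : ℕ) [NeZero m] {k : ℕ}
    (h : Fin k → ℤ) :
    {a : ℕ | a < m ∧ ∀ i, ∃ b c : ℤ, (a : ℤ) + h i ≡ b ^ 2 + c ^ 2 [ZMOD m]}.ncard =
      #{x : ZMod m | ∀ i, IsSumTwoSq (x + h i)} := by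
  simp only [← ZMod.isSumTwoSq_intCast_iff, Int.cast_add, Int.cast_natCast]
  exact ZMod.ncard_setOf_lt_and_eq_card_filter m fun x ↦ ∀ i, IsSumTwoSq (x + h i)

theorem ZMod.card_filter_isUnit (n : ℕ) [NeZero n] : #{x : ZMod n | IsUnit x} = n.totient := by
  rw [← ZMod.card_units_eq_totient, ← Finset.card_univ,
    ← Finset.card_map ⟨Units.val, Units.val_injective⟩]
  congr 1
  ext x
  simp only [mem_filter, mem_univ, true_and, Finset.mem_map, Function.Embedding.coeFn_mk]
  exact Iff.rfl

theorem ZMod.card_filter_not_isUnit_prime_pow_succ (p : ℕ) [Fact p.Prime] (α : ℕ) :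
    #{x : ZMod (p ^ (α + 1)) | ¬IsUnit x} = p ^ α := by
  have hsplit := Finset.card_filter_add_card_filter_not (s := (univ : Finset (ZMod (p ^ (α + 1)))))
    (p := IsUnit)
  rw [card_filter_isUnit, Nat.totient_prime_pow_succ Fact.out, card_univ, ZMod.card] at hsplit
  have : p ^ (α + 1) = p ^ α * (p - 1) + p ^ α := by
    rw [pow_succ, ← Nat.mul_succ, Nat.succ_eq_add_one,
      Nat.sub_add_cancel (Fact.out : p.Prime).one_le]
  omega

noncomputable def sumTwoSqNonunitCard (p : ℕ) [NeZero p] (α : ℕ) : ℕ :=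
  #{x : ZMod (p ^ α) | ¬IsUnit x ∧ IsSumTwoSq x}

section

variable {p : ℕ} [Fact p.Prime]

theorem card_filter_isSumTwoSq (hp2 : p ≠ 2) (α : ℕ) :
    #{x : ZMod (p ^ α) | IsSumTwoSq x} = (p ^ α).totient + sumTwoSqNonunitCard p α := by
  rw [← ZMod.card_filter_isUnit, sumTwoSqNonunitCard, ← Finset.card_filter_add_card_filter_not
    (s := ({x : ZMod (p ^ α) | IsSumTwoSq x} : Finset _)) (p := IsUnit)]
  simp only [Finset.filter_filter]
  congr 2
  · ext x
    simp only [mem_filter, mem_univ, true_and, and_iff_right_iff_imp]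
    exact ZMod.isSumTwoSq_of_isUnit hp2
  · ext x
    simp only [mem_filter, mem_univ, true_and, and_comm]

theorem sumTwoSqNonunitCard_zero : sumTwoSqNonunitCard p 0 = 0 := by
  rw [sumTwoSqNonunitCard, Finset.card_eq_zero, Finset.filter_eq_empty_iff]
  exact fun x _ hx ↦ hx.1 (isUnit_of_subsingleton (M := ZMod 1) x)

theorem sumTwoSqNonunitCard_one : sumTwoSqNonunitCard p 1 = 1 := by
  rw [sumTwoSqNonunitCard, Finset.card_eq_one]
  refine ⟨0, ?_⟩
  ext x
  obtain ⟨n, rfl⟩ := ZMod.intCast_surjective x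
  simp only [mem_filter, mem_univ, true_and, mem_singleton,
    ZMod.isUnit_intCast_iff_not_dvd_pow Fact.out one_pos, not_not,
    ZMod.intCast_zmod_eq_zero_iff_dvd, pow_one]
  exact ⟨And.left, fun hn ↦ ⟨hn, 0, 0, by
    rw [(ZMod.intCast_zmod_eq_zero_iff_dvd n (p ^ 1)).2 (by simpa using hn)]; ring⟩⟩

theorem sumTwoSqNonunitCard_add_two (hp3 : p % 4 = 3) (α : ℕ) :
    sumTwoSqNonunitCard p (α + 2) = #{y : ZMod (p ^ α) | IsSumTwoSq y} := by
  let φ : ZMod (p ^ α) →+ ZMod (p ^ (α + 2)) :=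
    ZMod.lift _ ⟨(AddMonoidHom.mulLeft ((p : ZMod (p ^ (α + 2))) ^ 2)).comp (Int.castAddHom _), by
      simp [← pow_add, add_comm 2 α]; exact_mod_cast ZMod.natCast_self (p ^ (α + 2))⟩
  have hφ (n : ℤ) : φ n = (((p : ℤ) ^ 2 * n : ℤ) : ZMod (p ^ (α + 2))) := by simp [φ]
  have hunit (n : ℤ) : ¬IsUnit (n : ZMod (p ^ (α + 2))) ↔ (p : ℤ) ∣ n := by
    rw [ZMod.isUnit_intCast_iff_not_dvd_pow Fact.out (by omega), not_not]
  have hinj : Function.Injective φ := by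
    rw [injective_iff_map_eq_zero]
    intro y hy
    obtain ⟨n, rfl⟩ := ZMod.intCast_surjective y
    rw [hφ, ZMod.intCast_zmod_eq_zero_iff_dvd] at hy
    rw [ZMod.intCast_zmod_eq_zero_iff_dvd]
    push_cast at hy ⊢
    rw [pow_add, mul_comm] at hy
    exact (mul_dvd_mul_iff_left (by simp [(Fact.out : p.Prime).ne_zero])).1 hy
  rw [sumTwoSqNonunitCard, ← card_image_of_injective _ hinj]
  congr 1
  ext x
  obtain ⟨n, rfl⟩ := ZMod.intCast_surjective x
  simp only [mem_filter, mem_univ, true_and, mem_image, hunit, ZMod.isSumTwoSq_intCast_iff]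
  constructor
  · rintro ⟨hn, b, c, hbc⟩
    obtain ⟨m, b', c', rfl, hm⟩ :=
      Int.exists_eq_sq_mul_of_modEq_sq_add_sq hp3 hn (by exact_mod_cast hbc)
    exact ⟨m, (ZMod.isSumTwoSq_intCast_iff).2 ⟨b', c', by exact_mod_cast hm⟩, hφ m⟩
  · rintro ⟨y, hy, hyn⟩
    obtain ⟨m, rfl⟩ := ZMod.intCast_surjective y
    obtain ⟨b, c, hbc⟩ := (ZMod.isSumTwoSq_intCast_iff).1 hy
    rw [hφ, ZMod.intCast_eq_intCast_iff] at hyn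
    push_cast at hyn
    refine ⟨?_, p * b, p * c, hyn.symm.trans ?_⟩
    · exact (hyn.of_dvd (dvd_pow_self _ (by omega))).dvd_iff.1
        (dvd_mul_of_dvd_left (dvd_pow_self _ two_ne_zero) _)
    have := hbc.mul_left' (c := (p : ℤ) ^ 2)
    push_cast at this ⊢
    convert this using 1 <;> ring

theorem succ_mul_sumTwoSqNonunitCard_succ (hp3 : p % 4 = 3) :
    ∀ α : ℕ, (p + 1) * sumTwoSqNonunitCard p (α + 1) = p ^ α + p ^ ((α + 1) % 2)
  | 0 => by simp [sumTwoSqNonunitCard_one, add_comm]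
  | 1 => by
    rw [sumTwoSqNonunitCard_add_two hp3 0, card_filter_isSumTwoSq (by omega) 0,
      sumTwoSqNonunitCard_zero]
    simp [add_comm]
  | α + 2 => by
    have hmod : (α + 2 + 1) % 2 = (α + 1) % 2 := by omega
    rw [sumTwoSqNonunitCard_add_two hp3, card_filter_isSumTwoSq (by omega : p ≠ 2),
      Nat.totient_prime_pow_succ Fact.out, mul_add, succ_mul_sumTwoSqNonunitCard_succ hp3 α, hmod]
    zify [(Fact.out : p.Prime).one_le]
    ring

theorem tendsto_sumTwoSqNonunitCard_div_pow (hp3 : p % 4 = 3) :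
    Tendsto (fun α ↦ (sumTwoSqNonunitCard p α : ℝ) / (p : ℝ) ^ α) atTop
      (nhds ((p : ℝ) * (p + 1))⁻¹) := by
  rw [← tendsto_add_atTop_iff_nat 1]
  have hp : (1 : ℝ) < p := by exact_mod_cast (Fact.out : p.Prime).one_lt
  have hformula (α : ℕ) : (sumTwoSqNonunitCard p (α + 1) : ℝ) / (p : ℝ) ^ (α + 1) =
      ((p : ℝ) * (p + 1))⁻¹ + (p : ℝ) ^ ((α + 1) % 2) / ((p + 1) * (p : ℝ) ^ (α + 1)) := by
    have h := congrArg (Nat.cast (R := ℝ)) (succ_mul_sumTwoSqNonunitCard_succ hp3 α)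
    push_cast at h
    field_simp
    linear_combination (p : ℝ) * h
  have herror : Tendsto (fun α : ℕ ↦ (p : ℝ) ^ ((α + 1) % 2) / ((p + 1) * (p : ℝ) ^ (α + 1)))
      atTop (nhds 0) := by
    refine squeeze_zero (fun α ↦ by positivity) (fun α ↦ ?_)
      (tendsto_pow_atTop_nhds_zero_of_lt_one (by positivity) (inv_lt_one_of_one_lt₀ hp))
    have hparity : (p : ℝ) ^ ((α + 1) % 2) ≤ p :=
      (pow_le_pow_right₀ hp.le (by omega)).trans_eq (pow_one _)
    rw [inv_pow, div_le_iff₀ (by positivity), pow_succ]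
    field_simp
    nlinarith
  simpa [hformula] using tendsto_const_nhds.add herror

theorem card_filter_forall_isSumTwoSq_add (hp3 : p % 4 = 3) {k : ℕ} (h : Fin k → ℤ)
    (hinc : ∀ i j : Fin k, i ≠ j → ¬ (p : ℤ) ∣ h i - h j) (α : ℕ) :
    #{x : ZMod (p ^ (α + 1)) | ∀ i, IsSumTwoSq (x + h i)} + k * p ^ α =
      p ^ (α + 1) + k * sumTwoSqNonunitCard p (α + 1) := by
  have hunit (n : ℤ) : ¬IsUnit (n : ZMod (p ^ (α + 1))) ↔ (p : ℤ) ∣ n := by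
    rw [ZMod.isUnit_intCast_iff_not_dvd_pow Fact.out α.succ_pos, not_not]
  have hsplit := Finset.card_filter_forall_add_mem_imp_mem_add_mul
    (B := {x : ZMod (p ^ (α + 1)) | ¬IsUnit x}) (C := {x | ¬IsUnit x ∧ IsSumTwoSq x})
    (fun x hx ↦ mem_filter.2 ⟨mem_univ x, (mem_filter.1 hx).2.1⟩) (fun i ↦ (h i : ZMod _)) ?_
  · have hsos (y : ZMod (p ^ (α + 1))) :
        IsSumTwoSq y ↔ (¬IsUnit y → ¬IsUnit y ∧ IsSumTwoSq y) :=
      ⟨fun hy hu ↦ ⟨hu, hy⟩, fun hy ↦ (em (IsUnit y)).elim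
        (ZMod.isSumTwoSq_of_isUnit (by omega)) fun hu ↦ (hy hu).2⟩
    rw [Fintype.card_fin, ZMod.card, ZMod.card_filter_not_isUnit_prime_pow_succ] at hsplit
    rw [sumTwoSqNonunitCard]
    convert hsplit using 3
    ext x
    simp only [mem_filter, mem_univ, true_and]
    exact forall_congr' fun i ↦ hsos _
  · intro x i j hi hj
    by_contra hij
    obtain ⟨n, rfl⟩ := ZMod.intCast_surjective x
    simp only [mem_filter, mem_univ, true_and, ← Int.cast_add, hunit] at hi hj
    exact hinc i j hij (by simpa using dvd_sub hi hj)

end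

theorem local_density_coprime_case_general (k p : ℕ) (hp : p.Prime)
    (hp3 : p % 4 = 3) (h : Fin k → ℤ)
    (hinc : ∀ i j : Fin k, i ≠ j → ¬ ((p : ℤ) ∣ h i - h j)) :
    Tendsto (fun α : ℕ =>
        (Set.ncard {a : ℕ | a < p ^ α ∧ ∀ i : Fin k,
            ∃ b c : ℤ, (a : ℤ) + h i ≡ b ^ 2 + c ^ 2 [ZMOD (p : ℤ) ^ α]} : ℝ)
          / (p : ℝ) ^ α)
      atTop (nhds ((1 + 1 / (p : ℝ))⁻¹ * (1 - ((k : ℝ) - 1) / p))) := by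
  have : Fact p.Prime := ⟨hp⟩
  have hp0 : (p : ℝ) ≠ 0 := by exact_mod_cast hp.ne_zero
  have hdensity (α : ℕ) :
      (Set.ncard {a : ℕ | a < p ^ (α + 1) ∧ ∀ i : Fin k,
          ∃ b c : ℤ, (a : ℤ) + h i ≡ b ^ 2 + c ^ 2 [ZMOD (p : ℤ) ^ (α + 1)]} : ℝ)
        / (p : ℝ) ^ (α + 1) =
      1 - k / p + k * ((sumTwoSqNonunitCard p (α + 1) : ℝ) / (p : ℝ) ^ (α + 1)) := by
    have hcount := congrArg (Nat.cast (R := ℝ)) (card_filter_forall_isSumTwoSq_add hp3 h hinc α)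
    have hncard := ZMod.ncard_setOf_lt_and_forall_modEq_sq_add_sq (p ^ (α + 1)) h
    push_cast at hcount hncard
    rw [hncard]
    field_simp
    linear_combination (p : ℝ) * hcount
  have hlimit : (1 + 1 / (p : ℝ))⁻¹ * (1 - ((k : ℝ) - 1) / p) =
      1 - k / p + k * ((p : ℝ) * (p + 1))⁻¹ := by
    field_simp
    ring
  rw [← tendsto_add_atTop_iff_nat 1, hlimit]
  simp only [hdensity]
  exact tendsto_const_nhds.add
    (((tendsto_sumTwoSqNonunitCard_div_pow hp3).comp (tendsto_add_atTop_nat 1)).const_mul _)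

/-- For a prime `p ≡ 3 (mod 4)` with `p ≥ k`, and integers `h₁,…,h_k` pairwise
incongruent mod `p`, the local density `δ_h(p)` exists and equals
`(1 + 1/p)⁻¹ (1 − (k−1)/p)`. -/
theorem local_density_coprime_case (k p : ℕ) (hk : 1 ≤ k) (hp : p.Prime)
    (hp3 : p % 4 = 3) (hpk : k ≤ p) (h : Fin k → ℤ)
    (hinc : ∀ i j : Fin k, i ≠ j → ¬ ((p : ℤ) ∣ h i - h j)) :
    Tendsto (fun α : ℕ =>
        (Set.ncard {a : ℕ | a < p ^ α ∧ ∀ i : Fin k,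
            ∃ b c : ℤ, (a : ℤ) + h i ≡ b ^ 2 + c ^ 2 [ZMOD (p : ℤ) ^ α]} : ℝ)
          / (p : ℝ) ^ α)
      atTop (nhds ((1 + 1 / (p : ℝ))⁻¹ * (1 - ((k : ℝ) - 1) / p))) :=
  local_density_coprime_case_general k p hp hp3 h hinc
end

section
/- Let d ≥ 1 be squarefree, k ≥ 1, and y ≥ 1. Then the number of tuples of integers 0 < h₁ < ⋯ < h_k ≤ y such that d divides ∏_{0 ≤ i < j ≤ k}(h_i − h_j) (with h₀ := 0) is at most k^{2ω(d)} · (y^k/d + O_k(y^{k−1})). -/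
/-!
Every prime `p ∣ d` divides one of the at most `k²` differences `h_j - h_i` with `i < j`, so the
tuples are covered by at most `k^(2ω(d))` classes, one for each assignment of a pair `(i, j)` to
every prime. Within a class, `h_j` is determined modulo the product `m_j` of the primes assigned to
pairs ending at `j` by the earlier entries `h_i`, so `h ↦ (h_j / m_j)_j` is injective. As `d` is
squarefree, `∏ m_j = d`, and a class has at most `∏_j (y / m_j + 1) ≤ y^k / d + 2^k y^(k-1)`
elements.
-/

open Finset

theorem Finset.prod_add_one_le_prod_add {ι : Type*} (s : Finset ι) {a : ι → ℝ} {y : ℝ}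
    (ha₀ : ∀ i ∈ s, 0 ≤ a i) (hay : ∀ i ∈ s, a i ≤ y) (hy : 1 ≤ y) :
    ∏ i ∈ s, (a i + 1) ≤ ∏ i ∈ s, a i + (2 ^ #s - 1) * y ^ (#s - 1) := by
  classical
  rw [prod_add_one, ← add_sum_erase _ _ (mem_powerset_self s)]
  gcongr
  calc ∑ t ∈ s.powerset.erase s, ∏ i ∈ t, a i
      ≤ ∑ _t ∈ s.powerset.erase s, y ^ (#s - 1) := sum_le_sum fun t ht => ?_
    _ = (2 ^ #s - 1) * y ^ (#s - 1) := by
      rw [sum_const, card_erase_of_mem (mem_powerset_self s), card_powerset, nsmul_eq_mul,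
        Nat.cast_sub Nat.one_le_two_pow, Nat.cast_pow, Nat.cast_two, Nat.cast_one]
  obtain ⟨hne, hts⟩ := mem_erase.1 ht
  have hts := mem_powerset.1 hts
  have hcard : #t ≤ #s - 1 := by
    have := card_lt_card (ssubset_of_subset_of_ne hts hne)
    omega
  calc ∏ i ∈ t, a i ≤ ∏ _i ∈ t, y :=
        prod_le_prod (fun i hi => ha₀ i (hts hi)) fun i hi => hay i (hts hi)
    _ = y ^ #t := prod_const y
    _ ≤ y ^ (#s - 1) := pow_le_pow_right₀ hy hcard

theorem Finset.prod_floor_div_add_one_le {ι : Type*} (s : Finset ι) {m : ι → ℕ}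
    (hm : ∀ i ∈ s, 0 < m i) {y : ℝ} (hy : 1 ≤ y) :
    ((∏ i ∈ s, (⌊y⌋₊ / m i + 1) : ℕ) : ℝ) ≤
      y ^ #s / ∏ i ∈ s, (m i : ℝ) + (2 ^ #s - 1) * y ^ (#s - 1) := by
  calc ((∏ i ∈ s, (⌊y⌋₊ / m i + 1) : ℕ) : ℝ) ≤ ∏ i ∈ s, (y / m i + 1) := by
        push_cast
        refine prod_le_prod (fun i _ => by positivity) fun i _ => ?_
        gcongr
        exact Nat.cast_div_le.trans (by gcongr; exact Nat.floor_le (by linarith))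
    _ ≤ ∏ i ∈ s, (y / m i) + (2 ^ #s - 1) * y ^ (#s - 1) :=
        prod_add_one_le_prod_add s (fun i _ => by positivity)
          (fun i hi => div_le_self (by linarith) (Nat.one_le_cast.2 (hm i hi))) hy
    _ = y ^ #s / ∏ i ∈ s, (m i : ℝ) + (2 ^ #s - 1) * y ^ (#s - 1) := by
        rw [prod_div_distrib, prod_const]

theorem Set.ncard_le_card_mul_of_subset_iUnion {ι α : Type*} [Fintype ι] {s : Set α}
    {t : ι → Set α} (hs : s ⊆ ⋃ i, t i) (ht : ∀ i, (t i).Finite) {b : ℝ}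
    (hb : ∀ i, ((t i).ncard : ℝ) ≤ b) :
    (s.ncard : ℝ) ≤ Fintype.card ι * b := by
  have hunion : (⋃ i, t i).ncard ≤ ∑ i, (t i).ncard := by
    simpa using Finset.set_ncard_biUnion_le Finset.univ t
  calc (s.ncard : ℝ) ≤ ∑ i, ((t i).ncard : ℝ) := by
        exact_mod_cast (Set.ncard_le_ncard hs (Set.finite_iUnion ht)).trans hunion
    _ ≤ ∑ _i : ι, b := sum_le_sum fun i _ => hb i
    _ = Fintype.card ι * b := by rw [sum_const, card_univ, nsmul_eq_mul]

theorem finite_setOf_forall_natCast_le {ι : Type*} [Finite ι] (y : ℝ) :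
    {h : ι → ℕ | ∀ i, (h i : ℝ) ≤ y}.Finite :=
  (Set.Finite.pi fun _ => Set.finite_Iic ⌊y⌋₊).subset fun _ hh i _ => Nat.le_floor (hh i)

theorem exists_forall_prime_dvd_of_dvd_prod {β : Type*} {s : Finset β} {g : β → ℤ} {d : ℕ}
    (hd : (d : ℤ) ∣ ∏ q ∈ s, g q) :
    ∃ F : d.primeFactors → s, ∀ p : d.primeFactors, ((p : ℕ) : ℤ) ∣ g (F p) := by
  have (p : d.primeFactors) : ∃ q : s, ((p : ℕ) : ℤ) ∣ g q := by
    have hp := Nat.prime_iff_prime_int.1 (Nat.prime_of_mem_primeFactors p.2)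
    have hpd := (Int.natCast_dvd_natCast.2 (Nat.dvd_of_mem_primeFactors p.2)).trans hd
    obtain ⟨q, hq, hpq⟩ := hp.exists_mem_finset_dvd hpd
    exact ⟨⟨q, hq⟩, hpq⟩
  choose F hF using this
  exact ⟨F, hF⟩

theorem card_filter_fst_lt_snd_le (k : ℕ) :
    #{q : Fin (k + 1) × Fin (k + 1) | q.1 < q.2} ≤ k * k := by
  calc #{q : Fin (k + 1) × Fin (k + 1) | q.1 < q.2} ≤ #(range k ×ˢ range k) := by
        refine card_le_card_of_injOn (fun q => ((q.1 : ℕ), (q.2 : ℕ) - 1)) ?_ ?_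
        · intro q hq
          have := (mem_filter.1 hq).2
          simp only [coe_product, coe_range, Set.mem_prod, Set.mem_Iio]
          omega
        · intro q hq q' hq' hqq'
          have := (mem_filter.1 hq).2
          have := (mem_filter.1 hq').2
          simp only [Prod.mk.injEq] at hqq'
          ext <;> omega
    _ = k * k := by rw [card_product, card_range]

section EndpointModulus

variable {ι : Type*} [DecidableEq ι] {D : Finset ℕ}

def endpointModulus (f : D → ι × ι) (j : ι) : ℕ :=
  ∏ p with (f p).2 = j, (p : ℕ)

theorem endpointModulus_pos (hD : ∀ p ∈ D, p.Prime) (f : D → ι × ι) (j : ι) :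
    0 < endpointModulus f j :=
  prod_pos fun p _ => (hD p p.2).pos

theorem prod_endpointModulus [Fintype ι] (f : D → ι × ι) :
    ∏ j, endpointModulus f j = ∏ p ∈ D, p := by
  simp only [endpointModulus]
  rw [prod_fiberwise univ (fun p => (f p).2) (fun p => (p : ℕ))]
  exact prod_coe_sort D id

theorem endpointModulus_zero {k : ℕ} {f : D → Fin (k + 1) × Fin (k + 1)}
    (hf : ∀ p, (f p).1 < (f p).2) : endpointModulus f 0 = 1 :=
  prod_eq_one fun p hp => absurd ((mem_filter.1 hp).2 ▸ hf p) (Fin.not_lt_zero _)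

theorem natCast_endpointModulus_dvd (hD : ∀ p ∈ D, p.Prime) (f : D → ι × ι) (j : ι) {n : ℤ}
    (hn : ∀ p, (f p).2 = j → (p : ℤ) ∣ n) : (endpointModulus f j : ℤ) ∣ n := by
  rw [endpointModulus, Nat.cast_prod]
  refine prod_dvd_of_coprime (fun p _ q _ hpq => ?_) fun p hp => hn p (mem_filter.1 hp).2
  exact Nat.isCoprime_iff_coprime.2
    ((Nat.coprime_primes (hD p p.2) (hD q q.2)).2 (Subtype.coe_ne_coe.2 hpq))

theorem eq_of_div_endpointModulus_eq [LT ι] [WellFoundedLT ι] (hD : ∀ p ∈ D, p.Prime)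
    {f : D → ι × ι} (hf : ∀ p, (f p).1 < (f p).2) {h h' : ι → ℕ}
    (hh : ∀ p : D, ((p : ℕ) : ℤ) ∣ (h (f p).2 : ℤ) - h (f p).1)
    (hh' : ∀ p : D, ((p : ℕ) : ℤ) ∣ (h' (f p).2 : ℤ) - h' (f p).1)
    (hdiv : ∀ j, h j / endpointModulus f j = h' j / endpointModulus f j) : h = h' := by
  funext j
  induction j using WellFoundedLT.induction with
  | _ j ih =>
    refine Nat.ext_div_modEq (hdiv j) (Nat.modEq_iff_dvd.2 ?_)
    refine natCast_endpointModulus_dvd hD f j fun p hpj => ?_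
    subst hpj
    have := dvd_sub (hh' p) (hh p)
    rwa [ih _ (hf p), sub_sub_sub_cancel_right] at this

end EndpointModulus

def tuplesDvdAlong {k : ℕ} {D : Finset ℕ} (f : D → Fin (k + 1) × Fin (k + 1)) (y : ℝ) :
    Set (Fin (k + 1) → ℕ) :=
  {h | h 0 = 0 ∧ (∀ i, (h i : ℝ) ≤ y) ∧ ∀ p : D, ((p : ℕ) : ℤ) ∣ (h (f p).2 : ℤ) - h (f p).1}

theorem ncard_tuplesDvdAlong_le {k : ℕ} {D : Finset ℕ} (hD : ∀ p ∈ D, p.Prime)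
    {f : D → Fin (k + 1) × Fin (k + 1)} (hf : ∀ p, (f p).1 < (f p).2) {y : ℝ} (hy : 1 ≤ y) :
    ((tuplesDvdAlong f y).ncard : ℝ) ≤ y ^ k / ∏ p ∈ D, (p : ℝ) + (2 ^ k - 1) * y ^ (k - 1) := by
  set m := endpointModulus f
  let box : Fin (k + 1) → Finset ℕ := Fin.cons {0} fun j => range (⌊y⌋₊ / m j.succ + 1)
  have hmaps :
      ∀ h ∈ tuplesDvdAlong f y, (fun j => h j / m j) ∈ (Fintype.piFinset box : Set _) := by
    rintro h ⟨h0, hle, -⟩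
    rw [mem_coe, Fintype.mem_piFinset]
    refine Fin.cases (by simp [box, h0]) fun j => ?_
    simp only [box, Fin.cons_succ, mem_range, Nat.lt_succ_iff]
    exact Nat.div_le_div_right (Nat.le_floor (hle j.succ))
  have hinj : Set.InjOn (fun h j => h j / m j) (tuplesDvdAlong f y) :=
    fun h hh h' hh' e => eq_of_div_endpointModulus_eq hD hf hh.2.2 hh'.2.2 (congrFun e)
  have hcard := Set.ncard_le_ncard_of_injOn _ hmaps hinj
  rw [Set.ncard_coe_finset, Fintype.card_piFinset, Fin.prod_univ_succ] at hcard
  simp only [box, Fin.cons_zero, Fin.cons_succ, card_singleton, card_range, one_mul] at hcard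
  have hm : ∏ j : Fin k, (m j.succ : ℝ) = ∏ p ∈ D, (p : ℝ) := by
    have := prod_endpointModulus f
    rw [Fin.prod_univ_succ, endpointModulus_zero hf, one_mul] at this
    rw [← Nat.cast_prod, ← Nat.cast_prod, this]
  calc ((tuplesDvdAlong f y).ncard : ℝ) ≤ ((∏ j : Fin k, (⌊y⌋₊ / m j.succ + 1) : ℕ) : ℝ) := by
        exact_mod_cast hcard
    _ ≤ _ := prod_floor_div_add_one_le univ (fun j _ => endpointModulus_pos hD f _) hy
    _ = _ := by rw [card_univ, Fintype.card_fin, hm]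

theorem count_tuples_with_divisible_det_general (k : ℕ) :
    ∃ c : ℝ, 0 < c ∧ ∀ d : ℕ, Squarefree d → ∀ y : ℝ, 1 ≤ y →
      (Set.ncard {h : Fin (k + 1) → ℕ | h 0 = 0 ∧ StrictMono h ∧
          (∀ i : Fin (k + 1), (h i : ℝ) ≤ y) ∧
          (d : ℤ) ∣ ∏ q ∈ Finset.univ.filter
              (fun q : Fin (k + 1) × Fin (k + 1) => q.1 < q.2),
              ((h q.2 : ℤ) - (h q.1 : ℤ))} : ℝ)
        ≤ (k : ℝ) ^ (2 * d.primeFactors.card) * (y ^ k / d + c * y ^ (k - 1)) := by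
  refine ⟨2 ^ k, by positivity, fun d hd y hy => ?_⟩
  set P := univ.filter fun q : Fin (k + 1) × Fin (k + 1) => q.1 < q.2
  let A (F : d.primeFactors → P) :=
    tuplesDvdAlong (fun p => (F p : Fin (k + 1) × Fin (k + 1))) y
  have hcover : {h : Fin (k + 1) → ℕ | h 0 = 0 ∧ StrictMono h ∧ (∀ i, (h i : ℝ) ≤ y) ∧
      (d : ℤ) ∣ ∏ q ∈ P, ((h q.2 : ℤ) - (h q.1 : ℤ))} ⊆ ⋃ F, A F := by
    rintro h ⟨h0, -, hle, hdvd⟩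
    obtain ⟨F, hF⟩ := exists_forall_prime_dvd_of_dvd_prod hdvd
    exact Set.mem_iUnion.2 ⟨F, h0, hle, hF⟩
  have hclass (F : d.primeFactors → P) :
      ((A F).ncard : ℝ) ≤ y ^ k / d + 2 ^ k * y ^ (k - 1) := by
    have := ncard_tuplesDvdAlong_le (fun p => Nat.prime_of_mem_primeFactors)
      (fun p => (mem_filter.1 (F p).2).2) hy
    rw [← Nat.cast_prod, Nat.prod_primeFactors_of_squarefree hd] at this
    linarith [pow_nonneg (zero_le_one.trans hy) (k - 1)]
  have hcount : (Fintype.card (d.primeFactors → P) : ℝ) ≤ k ^ (2 * #d.primeFactors) := by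
    rw [Fintype.card_fun, Fintype.card_coe, Fintype.card_coe, pow_mul, sq]
    exact_mod_cast Nat.pow_le_pow_left (card_filter_fst_lt_snd_le k) _
  calc _ ≤ (Fintype.card (d.primeFactors → P) : ℝ) * (y ^ k / d + 2 ^ k * y ^ (k - 1)) :=
        Set.ncard_le_card_mul_of_subset_iUnion hcover
          (fun F => (finite_setOf_forall_natCast_le y).subset fun _ hh => hh.2.1) hclass
    _ ≤ _ := by gcongr

/-- For fixed `k ≥ 1` and squarefree `d`, the number of tuples
`0 < h₁ < ⋯ < h_k ≤ y` with `d ∣ ∏_{0 ≤ i < j ≤ k}(h_j − h_i)` (where `h₀ = 0`)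
is at most `k^(2ω(d)) (y^k/d + O_k(y^(k−1)))`. -/
theorem count_tuples_with_divisible_det (k : ℕ) (hk : 1 ≤ k) :
    ∃ c : ℝ, 0 < c ∧ ∀ d : ℕ, Squarefree d → ∀ y : ℝ, 1 ≤ y →
      (Set.ncard {h : Fin (k + 1) → ℕ | h 0 = 0 ∧ StrictMono h ∧
          (∀ i : Fin (k + 1), (h i : ℝ) ≤ y) ∧
          (d : ℤ) ∣ ∏ q ∈ Finset.univ.filter
              (fun q : Fin (k + 1) × Fin (k + 1) => q.1 < q.2),
              ((h q.2 : ℤ) - (h q.1 : ℤ))} : ℝ)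
        ≤ (k : ℝ) ^ (2 * d.primeFactors.card) * (y ^ k / d + c * y ^ (k - 1)) :=
  count_tuples_with_divisible_det_general k
end
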